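/- arXiv:2001.11726 — 6 statements merged into one kernel-verified Lean document; each statement's English description precedes it below -/
import Mathlib

section
/- Let V be a finite-dimensional real vector space, Λ a lattice in V, and let P and Q be integers greater than 1 that are relatively prime. Let f : V → ℝ be a discretely supported function and define f_P(x) = f(Px) − f(x) and f_Q(x) = f(Qx) − f(x). If both f_P and f_Q are Λ-periodic, then there exists a function f' : V → ℝ with f'(x) = f(x) for all x ≠ 0 such that f' is Λ-periodic. -/
open Filter Function

/-- `Λ` is a lattice in the finite-dimensional real vector space `V`:
it is the `ℤ`-span of an `ℝ`-basis of `V`. -/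
def IsLattice (V : Type*) [NormedAddCommGroup V] [NormedSpace ℝ V]
    [FiniteDimensional ℝ V] (Λ : Set V) : Prop :=
  ∃ b : Module.Basis (Fin (Module.finrank ℝ V)) ℝ V,
    Λ = (Submodule.span ℤ (Set.range b) : Submodule ℤ V)

/-- `f` is discretely supported: its support has no accumulation points in `V`. -/
def DiscretelySupported {V : Type*} [NormedAddCommGroup V] {α : Type*} [Zero α]
    (f : V → α) : Prop :=
  ∀ x : V, ¬ AccPt x (𝓟 (Function.support f))

/-- `f` is `Λ`-periodic. -/
def IsPeriodic {V : Type*} [AddCommGroup V] {α : Type*} (Λ : Set V) (f : V → α) : Prop :=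
  ∀ x : V, ∀ l ∈ Λ, f (x + l) = f x

/-! For `x ≠ 0` the telescoping identity `f x = ∑_{j ≥ 1} f_R (R⁻ʲ x)` is a finite sum, because `f`
vanishes on a punctured neighbourhood of `0`; and a periodic, discretely supported `f_R` has only
finitely many support points modulo `Λ`.

The heart of the matter is `f (x + λ) = f x` for `λ ∈ Λ` and `x, x + λ ≠ 0`. Periodicity of `f_P`
gives `f (Pᵃ (x + λ)) - f (Pᵃ x) = f (x + λ) - f x` for all `a`, so if this is nonzero, the
`Q`-expansion puts every `Pᵃ x` in some `Qⁿ t + Λ` with `t` from a finite set; two exponents with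
the same `t` and the coprimality of `P` and `Q` make `x` a rational point of `Λ`. At a rational
point the deep terms of the `R`-expansion vanish (a common denominator against the discreteness
of `Λ`), so `f` is invariant under `Rᴬ Λ` near `x` for `R = P` and `R = Q`; Bezout for `Pᴬ` and
`Qᴮ` then gives invariance under all of `Λ`. Hence `f` is constant on `Λ \ {0}`, and redefining
`f 0` makes `f` periodic. -/

open Set Submodule Topology

section DiscretelySupported

variable {V : Type*} [NormedAddCommGroup V]

theorem discretelySupported_iff_eventually {α : Type*} [Zero α] {f : V → α} :
    DiscretelySupported f ↔ ∀ x, ∀ᶠ y in 𝓝 x, y ≠ x → f y = 0 := by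
  simp only [DiscretelySupported, accPt_iff_frequently, not_frequently, not_and, mem_support,
    not_not]

theorem DiscretelySupported.finite_support_inter [ProperSpace V] {α : Type*} [Zero α]
    {f : V → α} (hf : DiscretelySupported f) {K : Set V} (hK : Bornology.IsBounded K) :
    (support f ∩ K).Finite := by
  have hS := isClosed_and_discrete_iff.2 fun x => disjoint_iff.2 (not_neBot.1 (hf x))
  rw [inter_comm]
  exact Metric.finite_isBounded_inter_isClosed hS.2 hK hS.1

theorem DiscretelySupported.sub {G : Type*} [AddGroup G] {f g : V → G}
    (hf : DiscretelySupported f) (hg : DiscretelySupported g) : DiscretelySupported (f - g) := by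
  rw [discretelySupported_iff_eventually] at *
  intro x
  filter_upwards [hf x, hg x] with y hfy hgy hyx
  simp [hfy hyx, hgy hyx]

theorem DiscretelySupported.comp_smul [NormedSpace ℝ V] {α : Type*} [Zero α] {f : V → α}
    (hf : DiscretelySupported f) {R : ℝ} (hR : R ≠ 0) :
    DiscretelySupported fun x => f (R • x) := by
  rw [discretelySupported_iff_eventually] at *
  intro x
  filter_upwards [((continuous_const_smul R).tendsto x).eventually (hf (R • x))] with y hy hyx
  exact hy ((smul_right_injective V hR).ne hyx)

end DiscretelySupported

section Expansion

variable {V : Type*} [NormedAddCommGroup V] [NormedSpace ℝ V] {G : Type*} [AddCommGroup G]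

def scaleDiff (f : V → G) (R : ℝ) (x : V) : G := f (R • x) - f x

variable {f : V → G} {R : ℝ}

theorem discretelySupported_scaleDiff (hf : DiscretelySupported f) (hR : R ≠ 0) :
    DiscretelySupported (scaleDiff f R) :=
  (hf.comp_smul hR).sub hf

theorem eq_add_sum_scaleDiff (f : V → G) (hR : R ≠ 0) (z : V) (a : ℕ) :
    f z = f ((R ^ a)⁻¹ • z) + ∑ j ∈ Finset.range a, scaleDiff f R ((R ^ (j + 1))⁻¹ • z) := by
  have hterm : ∀ j : ℕ, scaleDiff f R ((R ^ (j + 1))⁻¹ • z) =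
      f ((R ^ j)⁻¹ • z) - f ((R ^ (j + 1))⁻¹ • z) := fun j => by
    rw [scaleDiff, smul_smul, pow_succ, mul_inv, ← mul_assoc, mul_comm R, mul_assoc,
      mul_inv_cancel₀ hR, mul_one]
  simp only [hterm, Finset.sum_range_sub', pow_zero, inv_one, one_smul]
  abel

theorem DiscretelySupported.eventually_eq_sum_scaleDiff (hf : DiscretelySupported f)
    (hR : 1 < |R|) {z : V} (hz : z ≠ 0) :
    ∀ᶠ a in atTop, f z = ∑ j ∈ Finset.range a, scaleDiff f R ((R ^ (j + 1))⁻¹ • z) := by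
  have hR0 : R ≠ 0 := abs_pos.1 (zero_lt_one.trans hR)
  have hlim : Tendsto (fun a : ℕ => (R ^ a)⁻¹ • z) atTop (𝓝 0) := by
    have hr : |R⁻¹| < 1 := by
      rw [abs_inv]
      exact inv_lt_one_of_one_lt₀ hR
    simpa [inv_pow] using (tendsto_pow_atTop_nhds_zero_of_abs_lt_one hr).smul_const z
  filter_upwards [hlim.eventually (discretelySupported_iff_eventually.1 hf 0)] with a ha
  rw [eq_add_sum_scaleDiff f hR0 z a, ha (smul_ne_zero (by simp [hR0]) hz), zero_add]

theorem DiscretelySupported.eq_of_scaleDiff_eq (hf : DiscretelySupported f) (hR : 1 < |R|)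
    {y y' : V} (hy : y ≠ 0) (hy' : y' ≠ 0)
    (h : ∀ n : ℕ, scaleDiff f R ((R ^ (n + 1))⁻¹ • y) = scaleDiff f R ((R ^ (n + 1))⁻¹ • y')) :
    f y = f y' := by
  obtain ⟨a, ha, ha'⟩ :=
    ((hf.eventually_eq_sum_scaleDiff hR hy).and (hf.eventually_eq_sum_scaleDiff hR hy')).exists
  rw [ha, ha']
  exact Finset.sum_congr rfl fun n _ => h n

theorem DiscretelySupported.exists_scaleDiff_ne_zero (hf : DiscretelySupported f) (hR : 1 < |R|)
    {y : V} (hy : y ≠ 0) (hfy : f y ≠ 0) :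
    ∃ n : ℕ, scaleDiff f R ((R ^ (n + 1))⁻¹ • y) ≠ 0 := by
  obtain ⟨a, ha⟩ := (hf.eventually_eq_sum_scaleDiff hR hy).exists
  by_contra! h
  exact hfy (ha.trans (Finset.sum_eq_zero fun n _ => h n))

end Expansion

section RationalPoints

variable {V : Type*} [NormedAddCommGroup V] [NormedSpace ℝ V] (L : Submodule ℤ V)

theorem Submodule.intCast_smul_mem {x : V} (hx : x ∈ L) (k : ℤ) : (k : ℝ) • x ∈ L := by
  rw [Int.cast_smul_eq_zsmul]
  exact L.smul_mem k hx

theorem Submodule.intCast_pow_smul_mem {x : V} (hx : x ∈ L) (k : ℤ) (n : ℕ) :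
    (k : ℝ) ^ n • x ∈ L := by
  exact_mod_cast L.intCast_smul_mem hx (k ^ n)

def IsRationalPoint (x : V) : Prop := ∃ m : ℤ, m ≠ 0 ∧ (m : ℝ) • x ∈ L

variable {L}

theorem IsRationalPoint.add_mem {x l : V} (hx : IsRationalPoint L x) (hl : l ∈ L) :
    IsRationalPoint L (x + l) := by
  obtain ⟨m, hm, hmx⟩ := hx
  exact ⟨m, hm, by simpa only [smul_add] using L.add_mem hmx (L.intCast_smul_mem hl m)⟩

theorem IsRationalPoint.of_intCast_smul {x : V} {k : ℤ} (hk : k ≠ 0)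
    (hx : IsRationalPoint L ((k : ℝ) • x)) : IsRationalPoint L x := by
  obtain ⟨m, hm, hmx⟩ := hx
  exact ⟨m * k, mul_ne_zero hm hk, by rwa [Int.cast_mul, mul_smul]⟩

theorem exists_ne_zero_forall_intCast_smul_mem (T : Finset V) (hT : ∀ t ∈ T, IsRationalPoint L t) :
    ∃ D : ℤ, D ≠ 0 ∧ ∀ t ∈ T, (D : ℝ) • t ∈ L := by
  classical
  induction T using Finset.induction_on with
  | empty => exact ⟨1, one_ne_zero, by simp⟩
  | insert s T _ ih =>
    obtain ⟨D, hD, hDT⟩ := ih fun t ht => hT t (Finset.mem_insert_of_mem ht)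
    obtain ⟨m, hm, hms⟩ := hT s (Finset.mem_insert_self s T)
    refine ⟨m * D, mul_ne_zero hm hD, (Finset.forall_mem_insert _ _ _).2 ⟨?_, fun t ht => ?_⟩⟩
    · rw [Int.cast_mul, mul_comm, mul_smul]
      exact L.intCast_smul_mem hms D
    · rw [Int.cast_mul, mul_smul]
      exact L.intCast_smul_mem (hDT t ht) m

theorem isRationalPoint_of_pow_smul_sub_mem {P Q : ℤ} (hP : 1 < P) (hPQ : IsCoprime P Q)
    {x t : V} {a a' i i' : ℕ} (haa' : a < a') (h : (P : ℝ) ^ a • x - (Q : ℝ) ^ i • t ∈ L)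
    (h' : (P : ℝ) ^ a' • x - (Q : ℝ) ^ i' • t ∈ L) : IsRationalPoint L x := by
  obtain ⟨d, rfl⟩ := Nat.exists_eq_add_of_lt haa'
  set k : ℤ := Q ^ i * P ^ (d + 1) - Q ^ i'
  have hk : k ≠ 0 := by
    intro hk
    have hdvd : P ∣ Q ^ i' := ⟨Q ^ i * P ^ d, by linear_combination -hk⟩
    have := Int.isUnit_iff.1 (hPQ.pow_right.isUnit_of_dvd' dvd_rfl hdvd)
    omega
  have hkt : (k : ℝ) • t ∈ L := by
    have : (k : ℝ) • t = ((P : ℝ) ^ (a + d + 1) • x - (Q : ℝ) ^ i' • t) -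
        (P : ℝ) ^ (d + 1) • ((P : ℝ) ^ a • x - (Q : ℝ) ^ i • t) := by
      simp only [k]
      push_cast
      module
    rw [this]
    exact L.sub_mem h' (L.intCast_pow_smul_mem h P _)
  refine ⟨k * P ^ a, mul_ne_zero hk (pow_ne_zero _ (by omega)), ?_⟩
  have : ((k * P ^ a : ℤ) : ℝ) • x =
      (Q : ℝ) ^ i • ((k : ℝ) • t) + (k : ℝ) • ((P : ℝ) ^ a • x - (Q : ℝ) ^ i • t) := by
    push_cast
    module
  rw [this]
  exact L.add_mem (L.intCast_pow_smul_mem hkt Q i) (L.intCast_smul_mem h k)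

theorem apply_eq_of_forall_add_smul_eq {α : Type*} {f : V → α} {p q : ℤ} (hpq : IsCoprime p q)
    (hp : p ≠ 0) (hq : q ≠ 0) {z z' : V}
    (hz : ∀ μ ∈ L, z + (p : ℝ) • μ ≠ 0 → f (z + (p : ℝ) • μ) = f z)
    (hz' : ∀ μ ∈ L, z' + (q : ℝ) • μ ≠ 0 → f (z' + (q : ℝ) • μ) = f z') (h : z' - z ∈ L) :
    f z' = f z := by
  rcases eq_or_ne L ⊥ with rfl | hL
  · rw [Submodule.mem_bot, sub_eq_zero] at h
    rw [h]
  obtain ⟨ν₀, hν₀, hν₀0⟩ := (Submodule.ne_bot_iff L).1 hL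
  obtain ⟨u, v, huv⟩ := hpq
  have huv' : (u : ℝ) * p + v * q = 1 := by exact_mod_cast huv
  -- by Bezout `w t` lies in both `z + p L` and `z' + q L`, and `w 0 ≠ w 1`
  let w : ℤ → V := fun t => z + (p : ℝ) • ((u : ℝ) • (z' - z) + ((t * q : ℤ) : ℝ) • ν₀)
  have hw : ∀ t : ℤ, w t = z' + (q : ℝ) • (((-v : ℤ) : ℝ) • (z' - z) + ((t * p : ℤ) : ℝ) • ν₀) := by
    intro t
    simp only [w]
    push_cast
    match_scalars
    · linear_combination -huv'
    · linear_combination huv'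
    · ring
  have hcommon : ∀ t : ℤ, w t ≠ 0 → f z' = f z := fun t ht =>
    calc f z' = f (w t) := by
          rw [hw t] at ht ⊢
          exact (hz' _ (L.add_mem (L.intCast_smul_mem h _) (L.intCast_smul_mem hν₀ _)) ht).symm
      _ = f z := hz _ (L.add_mem (L.intCast_smul_mem h u) (L.intCast_smul_mem hν₀ _)) ht
  have hstep : w 1 - w 0 = ((p : ℝ) * q) • ν₀ := by
    simp only [w]
    push_cast
    module
  by_cases h0 : w 0 = 0
  · refine hcommon 1 fun h1 => ?_
    have hpq0 : ((p : ℝ) * q) • ν₀ = 0 := by rw [← hstep, h1, h0, sub_zero]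
    exact (smul_eq_zero.1 hpq0).elim (mul_ne_zero (by exact_mod_cast hp) (by exact_mod_cast hq))
      hν₀0
  · exact hcommon 0 h0

end RationalPoints

section Periodic

variable {V : Type*} [NormedAddCommGroup V] [NormedSpace ℝ V] (L : Submodule ℤ V)
  {G : Type*} [AddCommGroup G] {f : V → G}

theorem apply_pow_smul_add_sub {R : ℤ} (hper : IsPeriodic L (scaleDiff f R)) {l : V} (hl : l ∈ L)
    (x : V) (a : ℕ) :
    f ((R : ℝ) ^ a • (x + l)) - f ((R : ℝ) ^ a • x) = f (x + l) - f x := by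
  induction a with
  | zero => simp
  | succ a ih =>
    have hstep : ∀ y : V, f ((R : ℝ) ^ (a + 1) • y) =
        scaleDiff f R ((R : ℝ) ^ a • y) + f ((R : ℝ) ^ a • y) := fun y => by
      rw [scaleDiff, smul_smul, ← pow_succ']
      abel
    rw [hstep, hstep, smul_add, hper _ _ (L.intCast_pow_smul_mem hl R a), ← smul_add, ← ih]
    abel

end Periodic

section Lattice

variable {V : Type*} [NormedAddCommGroup V] [NormedSpace ℝ V]

theorem exists_pow_smul_notMem [ProperSpace V] (L : Submodule ℤ V) [DiscreteTopology L] {R : ℝ}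
    (hR : 1 < R) {w : V} (hw : w ≠ 0) : ∃ A : ℕ, ∀ μ ∈ L, w ≠ R ^ A • μ := by
  by_contra! h
  have hR0 : 0 < R := zero_lt_one.trans hR
  have hsub : range (fun A : ℕ => (R ^ A)⁻¹ • w) ⊆ Metric.closedBall 0 ‖w‖ ∩ L := by
    rintro _ ⟨A, rfl⟩
    obtain ⟨μ, hμ, hwμ⟩ := h A
    dsimp only
    refine ⟨?_, by rwa [hwμ, inv_smul_smul₀ (pow_ne_zero _ hR0.ne')]⟩
    rw [mem_closedBall_zero_iff, norm_smul, norm_inv, norm_pow, Real.norm_of_nonneg hR0.le]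
    exact mul_le_of_le_one_left (norm_nonneg w) (inv_le_one_of_one_le₀ (one_le_pow₀ hR.le))
  have hinj : Injective fun A : ℕ => (R ^ A)⁻¹ • w := fun A B hAB =>
    pow_right_injective₀ hR0 hR.ne' (inv_injective (smul_left_injective ℝ hw hAB))
  have hclosed : IsClosed (L : Set V) := AddSubgroup.isClosed_of_discrete (H := L.toAddSubgroup)
  exact infinite_range_of_injective hinj <| (Metric.finite_isBounded_inter_isClosed
    DiscreteTopology.isDiscrete Metric.isBounded_closedBall hclosed).subset hsub

variable [FiniteDimensional ℝ V] {ι : Type*} [Fintype ι] (b : Module.Basis ι ℝ V)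

theorem exists_finset_sub_mem_span {α : Type*} [Zero α] {g : V → α} (hg : DiscretelySupported g)
    (hper : IsPeriodic (span ℤ (range b) : Set V) g) :
    ∃ T : Finset V, ∀ y, g y ≠ 0 → ∃ t ∈ T, y - t ∈ span ℤ (range b) := by
  refine ⟨(hg.finite_support_inter (ZSpan.fundamentalDomain_isBounded b)).toFinset,
    fun y hy => ⟨ZSpan.fract b y, ?_, by simp [ZSpan.fract_apply]⟩⟩
  rw [Finite.mem_toFinset]
  refine ⟨?_, ZSpan.fract_mem_fundamentalDomain b y⟩
  rwa [mem_support, ZSpan.fract_apply, sub_eq_add_neg, hper _ _ (neg_mem (ZSpan.floor b y).2)]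

theorem exists_ne_zero_forall_intCast_smul_mem_of_isPeriodic {α : Type*} [Zero α] {g : V → α}
    (hg : DiscretelySupported g) (hper : IsPeriodic (span ℤ (range b) : Set V) g) :
    ∃ D : ℤ, D ≠ 0 ∧ ∀ s, g s ≠ 0 → IsRationalPoint (span ℤ (range b)) s →
      (D : ℝ) • s ∈ span ℤ (range b) := by
  classical
  obtain ⟨T, hT⟩ := exists_finset_sub_mem_span b hg hper
  set L := span ℤ (range b)
  obtain ⟨D, hD, hDT⟩ := exists_ne_zero_forall_intCast_smul_mem (T.filter (IsRationalPoint L))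
    fun t ht => (Finset.mem_filter.1 ht).2
  refine ⟨D, hD, fun s hs hrat => ?_⟩
  obtain ⟨t, ht, hst⟩ := hT s hs
  have htrat : IsRationalPoint L t := by simpa using hrat.add_mem (neg_mem hst)
  have := add_mem (hDT t (Finset.mem_filter.2 ⟨ht, htrat⟩)) (L.intCast_smul_mem hst D)
  rwa [← smul_add, add_sub_cancel] at this

end Lattice

section Main

variable {V : Type*} [NormedAddCommGroup V] [NormedSpace ℝ V] [FiniteDimensional ℝ V]
  {ι : Type*} [Fintype ι] (b : Module.Basis ι ℝ V) {G : Type*} [AddCommGroup G] {f : V → G}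

theorem exists_finset_forall_sub_pow_smul_mem {R : ℤ} (hR : 1 < R) (hf : DiscretelySupported f)
    (hper : IsPeriodic (span ℤ (range b) : Set V) (scaleDiff f R)) :
    ∃ T : Finset V, ∀ y, y ≠ 0 → f y ≠ 0 →
      ∃ t ∈ T, ∃ n : ℕ, y - (R : ℝ) ^ (n + 1) • t ∈ span ℤ (range b) := by
  have hR' : (1 : ℝ) < |(R : ℝ)| := by
    rw [abs_of_pos (by positivity)]
    exact_mod_cast hR
  have hR0 : (R : ℝ) ≠ 0 := by positivity
  obtain ⟨T, hT⟩ := exists_finset_sub_mem_span b (discretelySupported_scaleDiff hf hR0) hper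
  refine ⟨T, fun y hy hfy => ?_⟩
  obtain ⟨n, hn⟩ := hf.exists_scaleDiff_ne_zero hR' hy hfy
  obtain ⟨t, ht, hmem⟩ := hT _ hn
  refine ⟨t, ht, n, ?_⟩
  have := (span ℤ (range b)).intCast_pow_smul_mem hmem R (n + 1)
  rwa [smul_sub, smul_inv_smul₀ (pow_ne_zero _ hR0)] at this

theorem isRationalPoint_of_apply_add_ne {P Q : ℤ} (hP : 1 < P) (hQ : 1 < Q)
    (hPQ : IsCoprime P Q) (hf : DiscretelySupported f)
    (hperP : IsPeriodic (span ℤ (range b) : Set V) (scaleDiff f P))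
    (hperQ : IsPeriodic (span ℤ (range b) : Set V) (scaleDiff f Q)) {x l : V}
    (hl : l ∈ span ℤ (range b)) (hx : x ≠ 0) (hxl : x + l ≠ 0) (hne : f (x + l) ≠ f x) :
    IsRationalPoint (span ℤ (range b)) x := by
  obtain ⟨T, hT⟩ := exists_finset_forall_sub_pow_smul_mem b hQ hf hperQ
  set L := span ℤ (range b)
  have hP0 : ∀ a : ℕ, (P : ℝ) ^ a ≠ 0 := fun a => pow_ne_zero a (by positivity)
  have hhit : ∀ a : ℕ, ∃ t ∈ T, ∃ n : ℕ, (P : ℝ) ^ a • x - (Q : ℝ) ^ (n + 1) • t ∈ L := by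
    intro a
    by_cases hfa : f ((P : ℝ) ^ a • x) = 0
    · have hfa' : f ((P : ℝ) ^ a • (x + l)) ≠ 0 := by
        have hdiff := apply_pow_smul_add_sub L hperP hl x a
        rw [hfa, sub_zero] at hdiff
        rw [hdiff]
        exact sub_ne_zero.2 hne
      obtain ⟨t, ht, n, hmem⟩ := hT _ (smul_ne_zero (hP0 a) hxl) hfa'
      refine ⟨t, ht, n, ?_⟩
      have := L.sub_mem hmem (L.intCast_pow_smul_mem hl P a)
      rwa [smul_add, add_sub_right_comm, add_sub_cancel_right] at this
    · exact hT _ (smul_ne_zero (hP0 a) hx) hfa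
  choose t ht n hn using hhit
  -- pigeonhole: two exponents `a ≠ a'` share the same residue `t a`
  obtain ⟨a, a', haa', heq⟩ := Finite.exists_ne_map_eq_of_infinite fun a => (⟨t a, ht a⟩ : T)
  have hn' : (P : ℝ) ^ a' • x - (Q : ℝ) ^ (n a' + 1) • t a ∈ L := by
    rw [show t a = t a' from congrArg Subtype.val heq]
    exact hn a'
  rcases haa'.lt_or_gt with h | h
  · exact isRationalPoint_of_pow_smul_sub_mem hP hPQ h (hn a) hn'
  · exact isRationalPoint_of_pow_smul_sub_mem hP hPQ h hn' (hn a)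

theorem exists_pow_apply_add_eq_of_isRationalPoint {R : ℤ} (hR : 1 < R)
    (hf : DiscretelySupported f) (hper : IsPeriodic (span ℤ (range b) : Set V) (scaleDiff f R))
    {z : V} (hz : z ≠ 0) (hzr : IsRationalPoint (span ℤ (range b)) z) :
    ∃ A : ℕ, ∀ ν ∈ span ℤ (range b),
      z + (R : ℝ) ^ A • ν ≠ 0 → f (z + (R : ℝ) ^ A • ν) = f z := by
  have hR' : (1 : ℝ) < R := by exact_mod_cast hR
  have hR0 : (R : ℝ) ≠ 0 := by positivity
  obtain ⟨D, hD, hDs⟩ := exists_ne_zero_forall_intCast_smul_mem_of_isPeriodic b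
    (discretelySupported_scaleDiff hf hR0) hper
  set L := span ℤ (range b)
  have hdvd : ∀ w, IsRationalPoint L w → ∀ i : ℕ, scaleDiff f R (((R : ℝ) ^ i)⁻¹ • w) ≠ 0 →
      ∃ μ ∈ L, (D : ℝ) • w = (R : ℝ) ^ i • μ := by
    intro w hw i hne
    refine ⟨(D : ℝ) • ((R : ℝ) ^ i)⁻¹ • w, hDs _ hne ?_, ?_⟩
    · refine IsRationalPoint.of_intCast_smul (k := R ^ i) (pow_ne_zero _ (by omega)) ?_
      rwa [Int.cast_pow, smul_inv_smul₀ (pow_ne_zero _ hR0)]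
    · rw [smul_comm, smul_inv_smul₀ (pow_ne_zero _ hR0)]
  obtain ⟨A, hA⟩ :=
    exists_pow_smul_notMem L hR' (smul_ne_zero (Int.cast_ne_zero.2 hD : (D : ℝ) ≠ 0) hz)
  -- all terms of depth `≥ A` vanish on `z + R ^ A L`, since `D z ∉ R ^ A L`
  have hdeep : ∀ μ ∈ L, ∀ i ≥ A, scaleDiff f R (((R : ℝ) ^ i)⁻¹ • (z + (R : ℝ) ^ A • μ)) = 0 := by
    intro μ hμ i hi
    by_contra hne
    obtain ⟨μ', hμ', hDμ'⟩ := hdvd _ (hzr.add_mem (L.intCast_pow_smul_mem hμ R A)) i hne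
    refine hA ((R : ℝ) ^ (i - A) • μ' - (D : ℝ) • μ)
      (L.sub_mem (L.intCast_pow_smul_mem hμ' R _) (L.intCast_smul_mem hμ D)) ?_
    rw [smul_sub, smul_smul, ← pow_add, Nat.add_sub_cancel' hi, ← hDμ']
    module
  refine ⟨A, fun ν hν hzν => hf.eq_of_scaleDiff_eq (by rwa [abs_of_pos (by positivity)]) hzν hz
    fun n => ?_⟩
  by_cases hn : n + 1 ≤ A
  · have hshift : ((R : ℝ) ^ (n + 1))⁻¹ • (z + (R : ℝ) ^ A • ν) =
        ((R : ℝ) ^ (n + 1))⁻¹ • z + (R : ℝ) ^ (A - (n + 1)) • ν := by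
      rw [smul_add, smul_smul, pow_sub₀ _ hR0 hn, mul_comm]
    rw [hshift, hper _ _ (L.intCast_pow_smul_mem hν R _)]
  · have hn : A ≤ n + 1 := (not_le.1 hn).le
    rw [hdeep ν hν _ hn, ← hdeep 0 (zero_mem L) _ hn, smul_zero, add_zero]

theorem apply_add_eq_of_mem_span {P Q : ℤ} (hP : 1 < P) (hQ : 1 < Q) (hPQ : IsCoprime P Q)
    (hf : DiscretelySupported f)
    (hperP : IsPeriodic (span ℤ (range b) : Set V) (scaleDiff f P))
    (hperQ : IsPeriodic (span ℤ (range b) : Set V) (scaleDiff f Q)) {x l : V}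
    (hl : l ∈ span ℤ (range b)) (hx : x ≠ 0) (hxl : x + l ≠ 0) : f (x + l) = f x := by
  by_contra hne
  have hrat := isRationalPoint_of_apply_add_ne b hP hQ hPQ hf hperP hperQ hl hx hxl hne
  obtain ⟨A, hA⟩ := exists_pow_apply_add_eq_of_isRationalPoint b hP hf hperP hx hrat
  obtain ⟨B, hB⟩ :=
    exists_pow_apply_add_eq_of_isRationalPoint b hQ hf hperQ hxl (hrat.add_mem hl)
  refine hne (apply_eq_of_forall_add_smul_eq hPQ.pow (pow_ne_zero A (by omega))
    (pow_ne_zero B (by omega)) (fun μ hμ => ?_) (fun μ hμ => ?_) (by simpa using hl))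
  · push_cast
    exact hA μ hμ
  · push_cast
    exact hB μ hμ

end Main

theorem exists_isPeriodic_eq_of_ne_zero {V α : Type*} [AddCommGroup V] (L : AddSubgroup V)
    {f : V → α} (h : ∀ x, ∀ l ∈ L, x ≠ 0 → x + l ≠ 0 → f (x + l) = f x) :
    ∃ f' : V → α, (∀ x, x ≠ 0 → f' x = f x) ∧ IsPeriodic L f' := by
  rcases L.bot_or_exists_ne_zero with rfl | ⟨ν₀, hν₀, hν₀0⟩
  · refine ⟨f, fun _ _ => rfl, fun x l hl => ?_⟩
    rw [AddSubgroup.mem_bot.1 hl, add_zero]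
  classical
  have hconst : ∀ y ∈ L, update f 0 (f ν₀) y = f ν₀ := by
    intro y hy
    rcases eq_or_ne y 0 with rfl | hy0
    · exact update_self ..
    rw [update_of_ne hy0, ← add_sub_cancel ν₀ y]
    exact h ν₀ _ (sub_mem hy hν₀) hν₀0 (by rwa [add_sub_cancel])
  refine ⟨update f 0 (f ν₀), fun x hx => update_of_ne hx .., fun x l hl => ?_⟩
  by_cases hx : x ∈ L
  · rw [hconst x hx, hconst _ (add_mem hx hl)]
  have hx0 : x ≠ 0 := fun h0 => hx (h0 ▸ zero_mem L)
  have hxl0 : x + l ≠ 0 := fun h0 => hx (eq_neg_of_add_eq_zero_left h0 ▸ neg_mem hl)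
  rw [update_of_ne hx0, update_of_ne hxl0, h x l hl hx0 hxl0]

/-- **Theorem 1 (Periodicity Theorem).** If `P, Q > 1` are relatively prime integers,
`f` is discretely supported, and both `f_P(x) = f(Px) - f(x)` and `f_Q(x) = f(Qx) - f(x)`
are `Λ`-periodic, then some modification of `f` at `0` is `Λ`-periodic. -/
theorem periodicity_theorem
    (V : Type*) [NormedAddCommGroup V] [NormedSpace ℝ V] [FiniteDimensional ℝ V]
    (Λ : Set V) (hΛ : IsLattice V Λ)
    (P Q : ℤ) (hP : 1 < P) (hQ : 1 < Q) (hPQ : IsCoprime P Q)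
    (f : V → ℝ) (hf : DiscretelySupported f)
    (hfP : IsPeriodic Λ (fun x => f ((P : ℝ) • x) - f x))
    (hfQ : IsPeriodic Λ (fun x => f ((Q : ℝ) • x) - f x)) :
    ∃ f' : V → ℝ, (∀ x : V, x ≠ 0 → f' x = f x) ∧ IsPeriodic Λ f' := by
  obtain ⟨b, rfl⟩ := hΛ
  exact exists_isPeriodic_eq_of_ne_zero (span ℤ (range b)).toAddSubgroup
    fun x l hl hx hxl => apply_add_eq_of_mem_span b hP hQ hPQ hf hfP hfQ hl hx hxl
end

section
/- Fix an integer N ≥ 1, and let S and T be disjoint, non-empty finite sets of prime numbers. Let ∼ be the equivalence relation on the set of integers generated by ∼_S and ∼_T, i.e. x ∼ y if there exists a finite sequence x = x⁽¹⁾, …, x⁽ᴷ⁾ = y of integers such that for every i, x⁽ⁱ⁾ ∼_S x⁽ⁱ⁺¹⁾ or x⁽ⁱ⁾ ∼_T x⁽ⁱ⁺¹⁾. Then for nonzero integers x and y, one has x ∼ y if and only if x ≡ y (mod N). -/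
/-- The prime-to-`S` part of an integer `x`: `x` divided by `∏_{p ∈ S} p^{v_p(x)}`
(retaining the sign). -/
def primeToPart (S : Finset ℕ) (x : ℤ) : ℤ :=
  x / ∏ p ∈ S, (p : ℤ) ^ (padicValInt p x)

/-- The relation `x ∼_S y` (relative to the modulus `N`): for nonzero `x, y` it means
`v_p(x) = v_p(y)` for every `p ∈ S` and `x'_S ≡ y'_S (mod N)`; the class of `0` is a
singleton. -/
def SimRel (N : ℤ) (S : Finset ℕ) (x y : ℤ) : Prop :=
  (x = 0 ∧ y = 0) ∨
    (x ≠ 0 ∧ y ≠ 0 ∧ (∀ p ∈ S, padicValInt p x = padicValInt p y) ∧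
      primeToPart S x ≡ primeToPart S y [ZMOD N])

section Aux

lemma prodPow_ne_zero (S : Finset ℕ) (hS : ∀ p ∈ S, p.Prime) (e : ℕ → ℕ) :
    (∏ p ∈ S, (p : ℤ) ^ (e p)) ≠ 0 := by
  apply Finset.prod_ne_zero_iff.mpr
  intro p hp
  exact pow_ne_zero _ (Int.natCast_ne_zero.mpr (hS p hp).ne_zero)

lemma prodPow_not_dvd {S : Finset ℕ} (hS : ∀ p ∈ S, p.Prime) (e : ℕ → ℕ)
    {ℓ : ℕ} (hℓ : ℓ.Prime) (hnot : ℓ ∉ S) :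
    ¬ (ℓ : ℤ) ∣ ∏ p ∈ S, (p : ℤ) ^ (e p) := by
  intro h
  obtain ⟨p, hpS, hpd⟩ :=
    ((Nat.prime_iff_prime_int.mp hℓ).dvd_finset_prod_iff _).mp h
  have h2 : (ℓ : ℤ) ∣ (p : ℤ) := (Nat.prime_iff_prime_int.mp hℓ).dvd_of_dvd_pow hpd
  have h3 : ℓ = p :=
    (Nat.prime_dvd_prime_iff_eq hℓ (hS p hpS)).mp (Int.natCast_dvd_natCast.mp h2)
  exact hnot (h3 ▸ hpS)

lemma padicValInt_prodPow_mul {S : Finset ℕ} (hS : ∀ p ∈ S, p.Prime) (e : ℕ → ℕ)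
    {u : ℤ} (hu : u ≠ 0) (hcop : ∀ p ∈ S, ¬ (p : ℤ) ∣ u) {p : ℕ} (hp : p ∈ S) :
    padicValInt p ((∏ q ∈ S, (q : ℤ) ^ (e q)) * u) = e p := by
  haveI : Fact p.Prime := ⟨hS p hp⟩
  rw [padicValInt.mul (prodPow_ne_zero S hS e) hu,
    padicValInt.eq_zero_of_not_dvd (hcop p hp), add_zero,
    ← Finset.mul_prod_erase _ _ hp,
    padicValInt.mul (pow_ne_zero _ (Int.natCast_ne_zero.mpr (hS p hp).ne_zero))
      (prodPow_ne_zero _ (fun q hq => hS q (Finset.mem_of_mem_erase hq)) e),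
    padicValInt.eq_zero_of_not_dvd
      (prodPow_not_dvd (fun q hq => hS q (Finset.mem_of_mem_erase hq)) e (hS p hp)
        (Finset.notMem_erase p S)), add_zero]
  have : ((p : ℤ) ^ (e p)).natAbs = p ^ (e p) := by
    rw [Int.natAbs_pow, Int.natAbs_natCast]
  rw [padicValInt, this, padicValNat.prime_pow]

lemma primeToPart_prodPow_mul {S : Finset ℕ} (hS : ∀ p ∈ S, p.Prime) (e : ℕ → ℕ)
    {u : ℤ} (hu : u ≠ 0) (hcop : ∀ p ∈ S, ¬ (p : ℤ) ∣ u) :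
    primeToPart S ((∏ q ∈ S, (q : ℤ) ^ (e q)) * u) = u := by
  unfold primeToPart
  rw [show (∏ p ∈ S, (p : ℤ) ^ (padicValInt p ((∏ q ∈ S, (q : ℤ) ^ (e q)) * u)))
      = ∏ q ∈ S, (q : ℤ) ^ (e q) from
    Finset.prod_congr rfl fun p hp => by rw [padicValInt_prodPow_mul hS e hu hcop hp]]
  exact Int.mul_ediv_cancel_left u (prodPow_ne_zero S hS e)

lemma prodPow_dvd (S : Finset ℕ) (hS : ∀ p ∈ S, p.Prime) (x : ℤ) :
    (∏ p ∈ S, (p : ℤ) ^ (padicValInt p x)) ∣ x := by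
  apply Finset.prod_dvd_of_coprime
  · intro p hp q hq hne
    haveI : Fact (p : ℕ).Prime := ⟨hS p hp⟩
    haveI : Fact (q : ℕ).Prime := ⟨hS q hq⟩
    exact (Nat.isCoprime_iff_coprime.mpr
      ((Nat.coprime_primes (hS p hp) (hS q hq)).mpr hne)).pow
  · intro p hp
    haveI : Fact p.Prime := ⟨hS p hp⟩
    exact padicValInt_dvd x

lemma primeToPart_decomp {S : Finset ℕ} (hS : ∀ p ∈ S, p.Prime) (x : ℤ) :
    x = (∏ p ∈ S, (p : ℤ) ^ (padicValInt p x)) * primeToPart S x :=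
  (Int.mul_ediv_cancel' (prodPow_dvd S hS x)).symm

lemma not_dvd_primeToPart {S : Finset ℕ} (hS : ∀ p ∈ S, p.Prime) {x : ℤ} (hx : x ≠ 0)
    {p : ℕ} (hp : p ∈ S) : ¬ (p : ℤ) ∣ primeToPart S x := by
  haveI : Fact p.Prime := ⟨hS p hp⟩
  rintro ⟨m, hm⟩
  have hdecomp := primeToPart_decomp hS x
  rw [← Finset.mul_prod_erase _ _ hp, hm] at hdecomp
  have hdvd : (p : ℤ) ^ (padicValInt p x + 1) ∣ x := by
    refine ⟨(∏ q ∈ S.erase p, (q : ℤ) ^ (padicValInt q x)) * m, ?_⟩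
    conv_lhs => rw [hdecomp]
    ring
  rcases (padicValInt_dvd_iff _ x).mp hdvd with h | h
  · exact hx h
  · omega

lemma simRel_modEq (N : ℤ) {S : Finset ℕ} (hS : ∀ p ∈ S, p.Prime) {a b : ℤ}
    (h : SimRel N S a b) : a ≡ b [ZMOD N] := by
  rcases h with ⟨rfl, rfl⟩ | ⟨ha, hb, hval, hcong⟩
  · rfl
  · have hprod : (∏ p ∈ S, (p : ℤ) ^ (padicValInt p a))
        = ∏ p ∈ S, (p : ℤ) ^ (padicValInt p b) :=
      Finset.prod_congr rfl fun p hp => by rw [hval p hp]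
    calc a = (∏ p ∈ S, (p : ℤ) ^ (padicValInt p a)) * primeToPart S a :=
            primeToPart_decomp hS a
      _ ≡ (∏ p ∈ S, (p : ℤ) ^ (padicValInt p a)) * primeToPart S b [ZMOD N] :=
            hcong.mul_left _
      _ = b := by rw [hprod]; exact (primeToPart_decomp hS b).symm

end Aux

/-- **Lemma (pq-Lemma).** Let `N ≥ 1`, and let `S` and `T` be disjoint non-empty finite
sets of primes.  Let `∼` be the equivalence relation on `ℤ` generated by `∼_S` and
`∼_T`, i.e. `x ∼ y` iff there is a finite chain from `x` to `y` each step of which is a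
`∼_S`- or a `∼_T`-step.  Then for nonzero `x, y`: `x ∼ y` iff `x ≡ y (mod N)`. -/
theorem pq_lemma
    (N : ℤ) (hN : 1 ≤ N)
    (S T : Finset ℕ) (hS : ∀ p ∈ S, p.Prime) (hT : ∀ p ∈ T, p.Prime)
    (hST : Disjoint S T) (hSne : S.Nonempty) (hTne : T.Nonempty)
    (x y : ℤ) (hx : x ≠ 0) (hy : y ≠ 0) :
    Relation.ReflTransGen (fun a b => SimRel N S a b ∨ SimRel N T a b) x y ↔
      x ≡ y [ZMOD N] := by
  constructor
  · intro h
    clear hy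
    induction h with
    | refl => rfl
    | tail _ hbc ih =>
        exact ih.trans (hbc.elim (simRel_modEq N hS) (simRel_modEq N hT))
  · intro hxy
    have hNne : N ≠ 0 := by omega
    set P := ∏ p ∈ S, (p : ℤ) ^ (padicValInt p x) with hP
    set Q := ∏ q ∈ T, (q : ℤ) ^ (padicValInt q y) with hQ
    have hPne : P ≠ 0 := prodPow_ne_zero S hS _
    have hQne : Q ≠ 0 := prodPow_ne_zero T hT _
    have hxeq : x = P * primeToPart S x := primeToPart_decomp hS x
    have hyeq : y = Q * primeToPart T y := primeToPart_decomp hT y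
    have hPQ : IsCoprime P Q := by
      apply IsCoprime.prod_left
      intro p hp
      apply IsCoprime.prod_right
      intro q hq
      have hne : p ≠ q := fun h => (Finset.disjoint_left.mp hST hp) (h ▸ hq)
      exact (Nat.isCoprime_iff_coprime.mpr
        ((Nat.coprime_primes (hS p hp) (hT q hq)).mpr hne)).pow
    obtain ⟨g, h, hgh⟩ := hPQ
    set t₀ := g * primeToPart T y + h * primeToPart S x with ht₀
    set U := (S ∪ T).filter (fun ℓ : ℕ => ¬ ((ℓ : ℤ) ∣ N)) with hU
    set R := ∏ ℓ ∈ U, (ℓ : ℤ) with hR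
    have hUprime : ∀ ℓ ∈ U, ℓ.Prime := by
      intro ℓ hℓ
      rcases Finset.mem_union.mp (Finset.mem_filter.mp hℓ).1 with h' | h'
      exacts [hS ℓ h', hT ℓ h']
    have hRne : R ≠ 0 := by
      rw [hR]
      exact Finset.prod_ne_zero_iff.mpr fun ℓ hℓ =>
        Int.natCast_ne_zero.mpr (hUprime ℓ hℓ).ne_zero
    have hNR : IsCoprime N R := by
      apply IsCoprime.prod_right
      intro ℓ hℓ
      exact ((Nat.prime_iff_prime_int.mp (hUprime ℓ hℓ)).coprime_iff_not_dvd.mpr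
        (Finset.mem_filter.mp hℓ).2).symm
    obtain ⟨u, v, huv⟩ := hNR
    set t₁ := 1 - v * R * (1 - t₀) with ht₁
    have ht₁N : N ∣ t₁ - t₀ := ⟨u * (1 - t₀), by linear_combination (t₀ - 1) * huv⟩
    have ht₁R : R ∣ t₁ - 1 := ⟨-(v * (1 - t₀)), by ring⟩
    set t := if t₁ = 0 then t₁ + N * R else t₁ with ht
    have htN : N ∣ t - t₀ := by
      rw [ht]; split_ifs
      · exact (show t₁ + N * R - t₀ = (t₁ - t₀) + N * R by ring) ▸
          dvd_add ht₁N ⟨R, rfl⟩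
      · exact ht₁N
    have htR : R ∣ t - 1 := by
      rw [ht]; split_ifs
      · exact (show t₁ + N * R - 1 = (t₁ - 1) + R * N by ring) ▸
          dvd_add ht₁R ⟨N, rfl⟩
      · exact ht₁R
    have htne : t ≠ 0 := by
      rw [ht]; split_ifs with h0
      · rw [h0, zero_add]; exact mul_ne_zero hNne hRne
      · exact h0
    -- the two congruences
    have hxy' : N ∣ x - y := Int.ModEq.dvd hxy.symm
    have hc1 : N ∣ primeToPart S x - Q * t := by
      have h1 : primeToPart S x - Q * t₀ = g * (x - y) := by
        linear_combination (-(primeToPart S x)) * hgh - g * hxeq + g * hyeq - Q * ht₀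
      have h3 : primeToPart S x - Q * t = (primeToPart S x - Q * t₀) - Q * (t - t₀) := by
        ring
      rw [h3, h1]
      exact dvd_sub (hxy'.mul_left g) (htN.mul_left Q)
    have hc2 : N ∣ primeToPart T y - P * t := by
      have h1 : primeToPart T y - P * t₀ = h * (y - x) := by
        linear_combination (-(primeToPart T y)) * hgh + h * hxeq - h * hyeq - P * ht₀
      have h3 : primeToPart T y - P * t = (primeToPart T y - P * t₀) - P * (t - t₀) := by
        ring
      rw [h3, h1]
      exact dvd_sub (hxy.dvd.mul_left h) (htN.mul_left P)
    have htcop : ∀ ℓ ∈ S ∪ T, ¬ (ℓ : ℤ) ∣ t := by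
      intro ℓ hℓ hdvd
      have hℓp : ℓ.Prime := (Finset.mem_union.mp hℓ).elim (hS ℓ) (hT ℓ)
      by_cases hdN : (ℓ : ℤ) ∣ N
      · rcases Finset.mem_union.mp hℓ with hℓS | hℓT
        · have hd1 : (ℓ : ℤ) ∣ primeToPart S x := by
            have h4 : (ℓ : ℤ) ∣ primeToPart S x - Q * t := dvd_trans hdN hc1
            have h5 : (ℓ : ℤ) ∣ Q * t := hdvd.mul_left Q
            have h6 := dvd_add h4 h5
            simpa using h6
          exact not_dvd_primeToPart hS hx hℓS hd1
        · have hd1 : (ℓ : ℤ) ∣ primeToPart T y := by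
            have h4 : (ℓ : ℤ) ∣ primeToPart T y - P * t := dvd_trans hdN hc2
            have h5 : (ℓ : ℤ) ∣ P * t := hdvd.mul_left P
            have h6 := dvd_add h4 h5
            simpa using h6
          exact not_dvd_primeToPart hT hy hℓT hd1
      · have hℓU : ℓ ∈ U := Finset.mem_filter.mpr ⟨hℓ, hdN⟩
        have hdR : (ℓ : ℤ) ∣ R := hR ▸ Finset.dvd_prod_of_mem _ hℓU
        have h5 : (ℓ : ℤ) ∣ t - 1 := dvd_trans hdR htR
        have h6 : (ℓ : ℤ) ∣ 1 := by
          have h7 := dvd_sub hdvd h5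
          simpa using h7
        exact (Nat.prime_iff_prime_int.mp hℓp).not_dvd_one h6
    have hQt_ne : Q * t ≠ 0 := mul_ne_zero hQne htne
    have hPt_ne : P * t ≠ 0 := mul_ne_zero hPne htne
    have hQt_cop : ∀ p ∈ S, ¬ (p : ℤ) ∣ Q * t := by
      intro p hp hd
      rcases (Nat.prime_iff_prime_int.mp (hS p hp)).dvd_mul.mp hd with h' | h'
      · exact prodPow_not_dvd hT _ (hS p hp) (Finset.disjoint_left.mp hST hp) (hQ ▸ h')
      · exact htcop p (Finset.mem_union_left T hp) h'
    have hPt_cop : ∀ q ∈ T, ¬ (q : ℤ) ∣ P * t := by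
      intro q hq hd
      rcases (Nat.prime_iff_prime_int.mp (hT q hq)).dvd_mul.mp hd with h' | h'
      · exact prodPow_not_dvd hS _ (hT q hq) (Finset.disjoint_right.mp hST hq) (hP ▸ h')
      · exact htcop q (Finset.mem_union_right S hq) h'
    set z := P * (Q * t) with hz
    have hzne : z ≠ 0 := mul_ne_zero hPne hQt_ne
    have hz' : z = Q * (P * t) := by rw [hz]; ring
    have hvalS : ∀ p ∈ S, padicValInt p z = padicValInt p x := by
      intro p hp
      rw [hz, hP]
      exact padicValInt_prodPow_mul hS _ hQt_ne hQt_cop hp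
    have hptS : primeToPart S z = Q * t := by
      rw [hz, hP]
      exact primeToPart_prodPow_mul hS _ hQt_ne hQt_cop
    have hvalT : ∀ q ∈ T, padicValInt q z = padicValInt q y := by
      intro q hq
      rw [hz', hQ]
      exact padicValInt_prodPow_mul hT _ hPt_ne hPt_cop hq
    have hptT : primeToPart T z = P * t := by
      rw [hz', hQ]
      exact primeToPart_prodPow_mul hT _ hPt_ne hPt_cop
    have step1 : SimRel N S x z :=
      Or.inr ⟨hx, hzne, fun p hp => (hvalS p hp).symm, by
        rw [hptS]
        refine Int.modEq_iff_dvd.mpr ?_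
        have := dvd_neg.mpr hc1
        simpa using this⟩
    have step2 : SimRel N T z y :=
      Or.inr ⟨hzne, hy, fun q hq => hvalT q hq, by
        rw [hptT]
        exact Int.modEq_iff_dvd.mpr hc2⟩
    exact Relation.ReflTransGen.tail
      (Relation.ReflTransGen.single (Or.inl step1)) (Or.inr step2)
end

section
/- Let V be a finite-dimensional real vector space, Λ a lattice in V, and let P and Q be integers greater than 1 that are relatively prime. Let N be a positive integer and let f : V → ℝ be a discretely supported function whose support is contained in PQΛ. Define f_P(x) = f(Px) − f(x) and f_Q(x) = f(Qx) − f(x). If both f_P and f_Q are NΛ-periodic, then there exists a function f' : V → ℝ with f'(x) = f(x) for all x ≠ 0 such that f' is NΛ-periodic. -/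
open Filter Function

/-- For an integer `m`, the set `mΛ = {m • λ | λ ∈ Λ}`. -/
def intMulLattice {V : Type*} [AddCommGroup V] [Module ℝ V] (m : ℤ) (Λ : Set V) : Set V :=
  (fun v => (m : ℝ) • v) '' Λ

/-!
Write `g_R x = f (R • x) - f x`. Telescoping `g_{R^a}` into `g_R`'s shows that `g_{R^a}` is
`NΛ`-periodic as well. If `y ∉ R^a Λ`, then `f` vanishes on the whole coset `R⁻ᵃ y + NΛ`
(it is supported in `Λ ⊇ NΛ`), so periodicity of `g_{R^a}` at `R⁻ᵃ y` reads
`f (y + R^a l) = f y` for `l ∈ NΛ`. Now let `u, v ≠ 0` with `v - u ∈ NΛ`. Off `Λ` both values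
vanish. In `Λ`, a nonzero vector is not divisible by every power of an integer `R > 1`, so
`u ∉ P^a Λ` and `v ∉ Q^c Λ` for some `a, c`; a Bezout relation `α P^a + β Q^c = 1` then
splits `v - u` into a `P^a NΛ`-step from `u` and a `Q^c NΛ`-step from `v` meeting in the
middle, whence `f u = f v`. A function constant on the nonzero points of each coset becomes
periodic after changing its value at `0`.
-/

open Set Submodule

section

variable {V G : Type*} [AddCommGroup V] [AddCommGroup G]

theorem IsPeriodic.sub_comp_pow_smul {M : Type*} [Monoid M] [DistribMulAction M V] {L : Set V}
    {f : V → G} {r : M} (hL : ∀ l ∈ L, r • l ∈ L)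
    (h : IsPeriodic L fun x => f (r • x) - f x) (n : ℕ) :
    IsPeriodic L fun x => f (r ^ n • x) - f x := by
  induction n with
  | zero => intro x l _; simp
  | succ n ih =>
    intro x l hl
    have telescope : ∀ y, f (r ^ (n + 1) • y) - f y =
        (f (r ^ n • r • y) - f (r • y)) + (f (r • y) - f y) := fun y => by
      rw [pow_succ, mul_smul, sub_add_sub_cancel]
    have h₁ := ih (r • x) (r • l) (hL l hl)
    have h₂ := h x l hl
    show f (r ^ (n + 1) • (x + l)) - f (x + l) = f (r ^ (n + 1) • x) - f x
    rw [telescope, telescope]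
    simp only [smul_add] at h₁ h₂ ⊢
    rw [h₁, h₂]

open Classical in
theorem exists_isPeriodic_and_eq_of_ne_zero {α : Type*} {L : AddSubgroup V} {f : V → α}
    (hf : ∀ u v, u ≠ 0 → v ≠ 0 → v - u ∈ L → f u = f v) :
    ∃ f' : V → α, (∀ x, x ≠ 0 → f' x = f x) ∧ IsPeriodic (L : Set V) f' := by
  by_cases hL : ∃ l₀ ∈ L, l₀ ≠ 0
  · obtain ⟨l₀, hl₀, hl₀0⟩ := hL
    set g : V → V := fun x => if x = 0 then l₀ else x
    have hg0 : ∀ x, g x ≠ 0 := fun x => by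
      simp only [g]; split_ifs with h
      exacts [hl₀0, h]
    have hgL : ∀ x, g x - x ∈ L := fun x => by
      simp only [g]; split_ifs with h
      · simpa [h] using hl₀
      · simp
    refine ⟨f ∘ g, fun x hx => by simp [g, hx], fun x l hl => hf _ _ (hg0 _) (hg0 _) ?_⟩
    convert L.sub_mem (L.sub_mem (hgL x) (hgL (x + l))) hl using 1
    abel
  · push Not at hL
    exact ⟨f, fun _ _ => rfl, fun x l hl => by rw [hL l hl, add_zero]⟩

theorem AddSubgroup.map_zsmulAddGroupHom_le (m : ℤ) (S : AddSubgroup V) :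
    S.map (zsmulAddGroupHom m) ≤ S :=
  AddSubgroup.map_le_iff_le_comap.mpr fun _ hx => S.zsmul_mem hx m

variable [Module ℝ V]

theorem AddSubgroup.intCast_smul_mem (S : AddSubgroup V) (n : ℤ) {x : V} (hx : x ∈ S) :
    (n : ℝ) • x ∈ S := by
  rw [Int.cast_smul_eq_zsmul]
  exact S.zsmul_mem hx n

theorem intMulLattice_eq_coe_map (m : ℤ) (S : AddSubgroup V) :
    intMulLattice m (S : Set V) = (S.map (zsmulAddGroupHom m) : Set V) := by
  simp [intMulLattice, AddSubgroup.coe_map, Int.cast_smul_eq_zsmul]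

theorem Module.Basis.exists_inv_pow_smul_notMem_span_int {ι : Type*} (b : Module.Basis ι ℝ V)
    {R : ℤ} (hR : 1 < R.natAbs) {u : V} (hu : u ∈ span ℤ (range b)) (hu0 : u ≠ 0) :
    ∃ a : ℕ, ((R : ℝ) ^ a)⁻¹ • u ∉ span ℤ (range b) := by
  obtain ⟨i, hi⟩ : ∃ i, b.repr u i ≠ 0 := by
    by_contra! h
    exact hu0 (b.repr.map_eq_zero_iff.mp (Finsupp.ext h))
  obtain ⟨c, hc⟩ := (b.mem_span_iff_repr_mem ℤ u).mp hu i
  have hc0 : c ≠ 0 := by rintro rfl; simp_all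
  obtain ⟨n, hn⟩ : FiniteMultiplicity R c := Int.finiteMultiplicity_iff.mpr ⟨by omega, hc0⟩
  refine ⟨n + 1, fun h => hn ?_⟩
  obtain ⟨d, hd⟩ := (b.mem_span_iff_repr_mem ℤ _).mp h i
  have hR0 : (R : ℝ) ^ (n + 1) ≠ 0 := pow_ne_zero _ (by exact_mod_cast (by omega : R ≠ 0))
  refine ⟨d, ?_⟩
  have hcd : (c : ℝ) = (R : ℝ) ^ (n + 1) * d := by
    simp only [algebraMap_int_eq, eq_intCast] at hc hd
    rw [hd, map_smul, Finsupp.smul_apply, smul_eq_mul, ← hc, mul_inv_cancel_left₀ hR0]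
  exact_mod_cast hcd

variable {S L : AddSubgroup V} {f : V → G}

theorem apply_add_smul_eq (hLS : L ≤ S) (hsupp : support f ⊆ S) {r : ℝ}
    (hper : IsPeriodic (L : Set V) fun x => f (r • x) - f x) {y : V} (hy : r⁻¹ • y ∉ S)
    {l : V} (hl : l ∈ L) : f (y + r • l) = f y := by
  have hr : r ≠ 0 := by rintro rfl; simp at hy
  have hz : f (r⁻¹ • y) = 0 := notMem_support.mp fun h => hy (hsupp h)
  have hzl : f (r⁻¹ • y + l) = 0 :=
    notMem_support.mp fun h => hy (by simpa using S.sub_mem (hsupp h) (hLS hl))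
  simpa [hz, hzl, smul_add, smul_inv_smul₀ hr] using hper (r⁻¹ • y) l hl

theorem apply_eq_of_sub_mem_of_notMem (hLS : L ≤ S) (hsupp : support f ⊆ S) {P Q : ℤ}
    (hPQ : IsCoprime P Q) {a c : ℕ}
    (hfP : IsPeriodic (L : Set V) fun x => f ((P : ℝ) ^ a • x) - f x)
    (hfQ : IsPeriodic (L : Set V) fun x => f ((Q : ℝ) ^ c • x) - f x) {u v : V}
    (hu : ((P : ℝ) ^ a)⁻¹ • u ∉ S) (hv : ((Q : ℝ) ^ c)⁻¹ • v ∉ S) (huv : v - u ∈ L) :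
    f u = f v := by
  obtain ⟨α, β, hαβ⟩ := hPQ.pow (m := a) (n := c)
  obtain ⟨l, hl, rfl⟩ : ∃ l ∈ L, v = u + l := ⟨v - u, huv, by abel⟩
  have hsplit : (P : ℝ) ^ a • α • l + (Q : ℝ) ^ c • β • l = l := by
    have hαβ' : (P : ℝ) ^ a * α + (Q : ℝ) ^ c * β = 1 := by
      rw [mul_comm, mul_comm ((Q : ℝ) ^ c)]
      exact_mod_cast hαβ
    rw [← Int.cast_smul_eq_zsmul ℝ α, ← Int.cast_smul_eq_zsmul ℝ β, smul_smul, smul_smul,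
      ← add_smul, hαβ', one_smul]
  calc f u = f (u + (P : ℝ) ^ a • α • l) :=
        (apply_add_smul_eq hLS hsupp hfP hu (L.zsmul_mem hl α)).symm
    _ = f (u + l + (Q : ℝ) ^ c • (-β) • l) := by
      rw [neg_smul, smul_neg, eq_sub_of_add_eq hsplit]
      abel_nf
    _ = f (u + l) := apply_add_smul_eq hLS hsupp hfQ hv (L.zsmul_mem hl (-β))

theorem apply_eq_of_sub_mem (hLS : L ≤ S) (hsupp : support f ⊆ S) {P Q : ℤ}
    (hPQ : IsCoprime P Q) (hP : ∀ u ∈ S, u ≠ 0 → ∃ a : ℕ, ((P : ℝ) ^ a)⁻¹ • u ∉ S)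
    (hQ : ∀ u ∈ S, u ≠ 0 → ∃ c : ℕ, ((Q : ℝ) ^ c)⁻¹ • u ∉ S)
    (hfP : IsPeriodic (L : Set V) fun x => f ((P : ℝ) • x) - f x)
    (hfQ : IsPeriodic (L : Set V) fun x => f ((Q : ℝ) • x) - f x) {u v : V} (hu : u ≠ 0)
    (hv : v ≠ 0) (huv : v - u ∈ L) : f u = f v := by
  by_cases huS : u ∈ S
  · obtain ⟨a, ha⟩ := hP u huS hu
    obtain ⟨c, hc⟩ := hQ v (by simpa using S.add_mem huS (hLS huv)) hv
    exact apply_eq_of_sub_mem_of_notMem hLS hsupp hPQ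
      (hfP.sub_comp_pow_smul (fun _ => L.intCast_smul_mem P) a)
      (hfQ.sub_comp_pow_smul (fun _ => L.intCast_smul_mem Q) c) ha hc huv
  · have hvS : v ∉ S := fun hvS => huS (by simpa using S.sub_mem hvS (hLS huv))
    rw [notMem_support.mp fun h => huS (hsupp h), notMem_support.mp fun h => hvS (hsupp h)]

end

theorem periodicity_rational_case_general
    (V : Type*) [NormedAddCommGroup V] [NormedSpace ℝ V] [FiniteDimensional ℝ V]
    (Λ : Set V) (hΛ : IsLattice V Λ)
    (P Q : ℤ) (hP : 1 < P) (hQ : 1 < Q) (hPQ : IsCoprime P Q)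
    (N : ℤ)
    (f : V → ℝ)
    (hsupp : Function.support f ⊆ intMulLattice (P * Q) Λ)
    (hfP : IsPeriodic (intMulLattice N Λ) (fun x => f ((P : ℝ) • x) - f x))
    (hfQ : IsPeriodic (intMulLattice N Λ) (fun x => f ((Q : ℝ) • x) - f x)) :
    ∃ f' : V → ℝ, (∀ x : V, x ≠ 0 → f' x = f x) ∧ IsPeriodic (intMulLattice N Λ) f' := by
  obtain ⟨b, rfl⟩ := hΛ
  set S := (span ℤ (range b)).toAddSubgroup
  rw [show (span ℤ (range b) : Set V) = S from rfl, intMulLattice_eq_coe_map _ S] at hsupp hfP hfQ ⊢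
  have hsuppS : support f ⊆ S := hsupp.trans (S.map_zsmulAddGroupHom_le _)
  exact exists_isPeriodic_and_eq_of_ne_zero fun u v hu hv huv =>
    apply_eq_of_sub_mem (S.map_zsmulAddGroupHom_le N) hsuppS hPQ
      (fun u hu hu0 => b.exists_inv_pow_smul_notMem_span_int (by omega) hu hu0)
      (fun u hu hu0 => b.exists_inv_pow_smul_notMem_span_int (by omega) hu hu0) hfP hfQ hu hv huv

/-- **Proposition (rational case).** Let `P, Q > 1` be relatively prime integers, `N` a
positive integer, and `f` discretely supported with support contained in `PQΛ`. If both
`f_P` and `f_Q` are `NΛ`-periodic, then some modification of `f` at `0` is `NΛ`-periodic. -/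
theorem periodicity_rational_case
    (V : Type*) [NormedAddCommGroup V] [NormedSpace ℝ V] [FiniteDimensional ℝ V]
    (Λ : Set V) (hΛ : IsLattice V Λ)
    (P Q : ℤ) (hP : 1 < P) (hQ : 1 < Q) (hPQ : IsCoprime P Q)
    (N : ℤ) (hN : 0 < N)
    (f : V → ℝ) (hf : DiscretelySupported f)
    (hsupp : Function.support f ⊆ intMulLattice (P * Q) Λ)
    (hfP : IsPeriodic (intMulLattice N Λ) (fun x => f ((P : ℝ) • x) - f x))
    (hfQ : IsPeriodic (intMulLattice N Λ) (fun x => f ((Q : ℝ) • x) - f x)) :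
    ∃ f' : V → ℝ, (∀ x : V, x ≠ 0 → f' x = f x) ∧ IsPeriodic (intMulLattice N Λ) f' :=
  periodicity_rational_case_general V Λ hΛ P Q hP hQ hPQ N f hsupp hfP hfQ
end

section
/- Let V be a finite-dimensional real vector space, Λ a lattice in V, and let P and Q be integers greater than 1 that are multiplicatively independent. Let f : V → ℝ be a discretely supported function such that f_P(x) = f(Px) − f(x) and f_Q(x) = f(Qx) − f(x) are both Λ-periodic. Then there exists a lattice Λ' ⊆ Λ (depending on f) such that for every z ∉ ℚΛ and every λ ∈ Λ', f(z + λ) = f(z). If moreover gcd(P, Q) = 1, then one may take Λ' = Λ. -/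
open Filter Function

/-- `P` and `Q` are multiplicatively independent: `P ^ a = Q ^ b` with integer exponents
`a, b` implies `a = b = 0`. -/
def MultIndep (P Q : ℤ) : Prop :=
  ∀ a b : ℤ, (P : ℚ) ^ a = (Q : ℚ) ^ b → a = 0 ∧ b = 0

/-- `ℚΛ`: the `ℚ`-span of `Λ` in `V`, i.e. the set of finite `ℚ`-linear combinations of
elements of `Λ`. -/
def ratSpan {V : Type*} [AddCommGroup V] [Module ℝ V] (Λ : Set V) : Set V :=
  {v : V | ∃ (n : ℕ) (c : Fin n → ℚ) (l : Fin n → V),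
    (∀ i, l i ∈ Λ) ∧ v = ∑ i, (c i : ℝ) • l i}

/-!
Write `f_c x = f (c • x) - f x`. Since `f_Q` is `Λ`-periodic,
`f (Qᵐ • (y + μ)) - f (Qᵐ • y) = f (y + μ) - f y` for `μ ∈ Λ`, so `Qᴷ • Λ` consists of periods
at an irrational `z` as soon as `f` vanishes on a coset `Q⁻ᵐ • z + Λ` with `m ≤ K`.
If `f x ≠ 0` at an irrational `x`, then `f (P⁻ⁱ • x)` must change with `i`, because `P⁻ⁱ • x → 0`
and the support is discrete; so `f_P (P⁻ⁱ • x) ≠ 0` for some `i ≥ 1`. Reducing `P⁻ⁱ • x` modulo `Λ`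
gives one of the finitely many (say `K`) irrational points `s` of a fundamental domain with
`f_P s ≠ 0`, and `x - Pⁱ • s` is rational. By multiplicative independence a fixed `s` obstructs
in this way for at most one `m` (for a given `z`), so some `m ≤ K` is unobstructed.
Exchanging `P` and `Q` gives the periods `Pᴺ • Λ` as well, and `Pᴺ, Qᴷ` are coprime when `P, Q` are.
-/

open scoped Pointwise

theorem MultIndep.symm {P Q : ℤ} (h : MultIndep P Q) : MultIndep Q P :=
  fun a b hab => (h b a hab.symm).symm

theorem MultIndep.eq_of_pow_mul_pow_eq {P Q : ℤ} (hPQ : MultIndep P Q) (hP : P ≠ 0)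
    (hQ : Q ≠ 0) {i j m n : ℕ} (h : P ^ i * Q ^ m = P ^ j * Q ^ n) : i = j ∧ m = n := by
  have hPq : (P : ℚ) ≠ 0 := Int.cast_ne_zero.2 hP
  have hQq : (Q : ℚ) ≠ 0 := Int.cast_ne_zero.2 hQ
  have hq : (P : ℚ) ^ ((i : ℤ) - j) = (Q : ℚ) ^ ((n : ℤ) - m) := by
    rw [zpow_sub₀ hPq, zpow_sub₀ hQq, div_eq_div_iff (by positivity) (by positivity)]
    simp only [zpow_natCast]
    exact_mod_cast h.trans (mul_comm _ _)
  have := hPQ _ _ hq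
  omega

section RatHull

variable {V : Type*} [AddCommGroup V]

-- The paper's `ℚL`: vectors with a nonzero integer multiple in `L`.
def ratHull (L : Submodule ℤ V) : Submodule ℤ V :=
  (Submodule.torsion ℤ (V ⧸ L)).comap L.mkQ

theorem mem_ratHull {L : Submodule ℤ V} {v : V} :
    v ∈ ratHull L ↔ ∃ n : ℤ, n ≠ 0 ∧ n • v ∈ L := by
  simp [ratHull, ← Submodule.Quotient.mk_smul, Submodule.Quotient.mk_eq_zero,
    mem_nonZeroDivisors_iff_ne_zero]

theorem le_ratHull (L : Submodule ℤ V) : L ≤ ratHull L :=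
  fun v hv => mem_ratHull.2 ⟨1, one_ne_zero, by simpa using hv⟩

theorem mem_ratHull_of_zsmul_mem {L : Submodule ℤ V} {v : V} {k : ℤ} (hk : k ≠ 0)
    (h : k • v ∈ ratHull L) : v ∈ ratHull L := by
  obtain ⟨n, hn, hnv⟩ := mem_ratHull.1 h
  exact mem_ratHull.2 ⟨n * k, mul_ne_zero hn hk, by rwa [mul_smul]⟩

theorem exists_le_card_forall_sub_smul_notMem_ratHull {P Q : ℤ} (hPQ : MultIndep P Q)
    (hP : P ≠ 0) (hQ : Q ≠ 0) {L : Submodule ℤ V} {T : Finset V}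
    (hT : ∀ s ∈ T, s ∉ ratHull L) (z : V) :
    ∃ m ≤ T.card, ∀ i : ℕ, ∀ s ∈ T, z - (P ^ i * Q ^ m) • s ∉ ratHull L := by
  by_contra! h
  choose! i s hsT hmem using h
  obtain ⟨m₁, hm₁, m₂, hm₂, hne, hs⟩ := Finset.exists_ne_map_eq_of_card_lt_of_maps_to
    (s := Finset.range (T.card + 1)) (by simp)
    (fun m hm => hsT m (Nat.lt_succ_iff.1 (Finset.mem_range.1 hm)))
  rw [Finset.mem_range, Nat.lt_succ_iff] at hm₁ hm₂
  have hcoef : P ^ i m₂ * Q ^ m₂ - P ^ i m₁ * Q ^ m₁ ≠ 0 :=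
    sub_ne_zero.2 fun h => hne (hPQ.eq_of_pow_mul_pow_eq hP hQ h).2.symm
  have hdiff := sub_mem (hmem m₁ hm₁) (hmem m₂ hm₂)
  rw [← hs, sub_sub_sub_cancel_left, ← sub_smul] at hdiff
  exact hT _ (hsT m₁ hm₁) (mem_ratHull_of_zsmul_mem hcoef hdiff)

theorem apply_add_eq_of_isCoprime {S : Set V} {L : Submodule ℤ V}
    (hS : ∀ z ∈ S, ∀ μ ∈ L, z + μ ∈ S) {α : Type*} {f : V → α} {a b : ℤ} (hab : IsCoprime a b)
    (ha : ∀ z ∈ S, ∀ μ ∈ L, f (z + a • μ) = f z) (hb : ∀ z ∈ S, ∀ μ ∈ L, f (z + b • μ) = f z)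
    {z : V} (hz : z ∈ S) {μ : V} (hμ : μ ∈ L) : f (z + μ) = f z := by
  obtain ⟨u, v, huv⟩ := hab
  have hsplit : z + μ = z + a • (u • μ) + b • (v • μ) := by
    rw [smul_smul, smul_smul, add_assoc, ← add_smul, mul_comm a, mul_comm b, huv, one_smul]
  rw [hsplit, hb (z + a • (u • μ)) (hS z hz _ (L.smul_mem a (L.smul_mem u hμ))) _
      (L.smul_mem v hμ),
    ha z hz _ (L.smul_mem u hμ)]

end RatHull

section Analysis

open Topology

variable {V : Type*} [NormedAddCommGroup V] {f : V → ℝ}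

theorem DiscretelySupported.finite_inter (hf : DiscretelySupported f) {K : Set V}
    (hK : IsCompact K) : (support f ∩ K).Finite := by
  by_contra h
  obtain ⟨x, -, hx⟩ := Set.Infinite.exists_accPt_of_subset_isCompact h hK Set.inter_subset_right
  exact hf x (hx.mono (principal_mono.2 Set.inter_subset_left))

theorem DiscretelySupported.eventually_eq_zero (hf : DiscretelySupported f) {α : Type*}
    {l : Filter α} {u : α → V} {a : V} (hu : Tendsto u l (𝓝[≠] a)) :
    ∀ᶠ n in l, f (u n) = 0 := by
  have h := hf a
  rw [accPt_iff_frequently_nhdsNE, not_frequently] at h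
  exact hu.eventually (h.mono fun _ => Function.notMem_support.1)

variable [NormedSpace ℝ V]

theorem DiscretelySupported.finite_support_smul_sub_inter (hf : DiscretelySupported f) {c : ℝ}
    (hc : c ≠ 0) {K : Set V} (hK : IsCompact K) :
    (support (fun x => f (c • x) - f x) ∩ K).Finite := by
  have hcK := hf.finite_inter (hK.image (continuous_const_smul c))
  refine ((hf.finite_inter hK).union (hcK.preimage (smul_right_injective V hc).injOn)).subset ?_
  rintro x ⟨hx, hxK⟩
  by_cases hfx : f x = 0
  · exact Or.inr ⟨by simpa [hfx] using hx, x, hxK, rfl⟩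
  · exact Or.inl ⟨hfx, hxK⟩

theorem DiscretelySupported.exists_apply_ne_apply_inv_smul (hf : DiscretelySupported f) {c : ℝ}
    (hc : 1 < |c|) {x : V} (hx : x ≠ 0) (hfx : f x ≠ 0) :
    ∃ n : ℕ, f (c⁻¹ ^ n • x) ≠ f (c⁻¹ ^ (n + 1) • x) := by
  have hc0 : c ≠ 0 := by rintro rfl; norm_num at hc
  have hu : Tendsto (fun n : ℕ => c⁻¹ ^ n • x) atTop (𝓝[≠] 0) := by
    refine tendsto_nhdsWithin_iff.2 ⟨?_, Eventually.of_forall fun n =>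
      smul_ne_zero (pow_ne_zero _ (inv_ne_zero hc0)) hx⟩
    have hlt : |c⁻¹| < 1 := by rw [abs_inv]; exact inv_lt_one_of_one_lt₀ hc
    simpa using (tendsto_pow_atTop_nhds_zero_of_abs_lt_one hlt).smul_const x
  obtain ⟨N, hN⟩ := (hf.eventually_eq_zero hu).exists
  by_contra! h
  have hconst : ∀ n : ℕ, f (c⁻¹ ^ n • x) = f x := fun n => by
    induction n with
    | zero => simp
    | succ n ih => rw [← h n, ih]
  exact hfx ((hconst N).symm.trans hN)

theorem IsPeriodic.apply_pow_smul_add_sub {L : Submodule ℤ V} {c : ℤ}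
    (h : IsPeriodic (L : Set V) (fun x => f ((c : ℝ) • x) - f x)) (m : ℕ) (y : V) {μ : V}
    (hμ : μ ∈ L) : f (c ^ m • (y + μ)) - f (c ^ m • y) = f (y + μ) - f y := by
  induction m generalizing y μ with
  | zero => simp
  | succ m ih =>
    have hstep := h y μ hμ
    simp only [Int.cast_smul_eq_zsmul] at hstep
    rw [pow_succ, mul_smul, mul_smul, smul_add c, ih _ (L.smul_mem c hμ), ← smul_add]
    linarith

end Analysis

section Lattice

open Submodule

variable {V : Type*} [NormedAddCommGroup V] [NormedSpace ℝ V] {ι : Type*}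
  (b : Module.Basis ι ℝ V) {f : V → ℝ}

def irrationalDefectSet (f : V → ℝ) (c : ℝ) : Set V :=
  (ZSpan.fundamentalDomain b ∩ support (fun x => f (c • x) - f x)) \
    ratHull (span ℤ (Set.range b))

variable [Fintype ι]

theorem irrationalDefectSet_finite (hf : DiscretelySupported f) {c : ℝ} (hc : c ≠ 0) :
    (irrationalDefectSet b f c).Finite := by
  have := Module.Finite.of_basis b
  refine (hf.finite_support_smul_sub_inter hc
    (ZSpan.fundamentalDomain_isBounded b).isCompact_closure).subset ?_
  rintro x ⟨⟨hxD, hx⟩, -⟩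
  exact ⟨hx, subset_closure hxD⟩

theorem apply_eq_zero_of_forall_sub_notMem_ratHull (hf : DiscretelySupported f) {c : ℤ}
    (hc : 1 < |c|)
    (hfc : IsPeriodic (span ℤ (Set.range b) : Set V) (fun x => f ((c : ℝ) • x) - f x))
    {x : V} (hx : x ∉ ratHull (span ℤ (Set.range b)))
    (hxT : ∀ i : ℕ, ∀ s ∈ irrationalDefectSet b f c,
      x - c ^ i • s ∉ ratHull (span ℤ (Set.range b))) :
    f x = 0 := by
  set L := span ℤ (Set.range b)
  by_contra hfx
  have hx0 : x ≠ 0 := by rintro rfl; exact hx (zero_mem _)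
  obtain ⟨n, hn⟩ := hf.exists_apply_ne_apply_inv_smul (c := c) (by exact_mod_cast hc) hx0 hfx
  have hc0 : (c : ℝ) ≠ 0 := Int.cast_ne_zero.2 (by rintro rfl; norm_num at hc)
  set w := (c : ℝ)⁻¹ ^ (n + 1) • x
  have hxw : x = c ^ (n + 1) • w := by
    rw [← Int.cast_smul_eq_zsmul ℝ, Int.cast_pow, smul_smul, ← mul_pow, mul_inv_cancel₀ hc0,
      one_pow, one_smul]
  have hcw : (c : ℝ) • w = (c : ℝ)⁻¹ ^ n • x := by
    rw [smul_smul, pow_succ', ← mul_assoc, mul_inv_cancel₀ hc0, one_mul]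
  set s := ZSpan.fract b w
  have hfloor : (ZSpan.floor b w : V) ∈ L := (ZSpan.floor b w).2
  have hw : w = s + ZSpan.floor b w := (sub_add_cancel _ _).symm
  have hs : s ∈ irrationalDefectSet b f c := by
    refine ⟨⟨ZSpan.fract_mem_fundamentalDomain b w, ?_⟩, fun hs => hx ?_⟩
    · have hper := hfc s _ hfloor
      simp only at hper
      rw [← hw, hcw] at hper
      exact Function.mem_support.2 (hper ▸ sub_ne_zero.2 hn)
    · rw [hxw, hw]
      exact (ratHull L).smul_mem _ (add_mem hs (le_ratHull L hfloor))
  apply hxT (n + 1) s hs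
  rw [hxw, hw, smul_add, add_sub_cancel_left]
  exact le_ratHull L (L.smul_mem _ hfloor)

theorem exists_pow_period_off_ratHull (hf : DiscretelySupported f) {P Q : ℤ}
    (hPQ : MultIndep P Q) (hP : 1 < |P|) (hQ : Q ≠ 0)
    (hfP : IsPeriodic (span ℤ (Set.range b) : Set V) (fun x => f ((P : ℝ) • x) - f x))
    (hfQ : IsPeriodic (span ℤ (Set.range b) : Set V) (fun x => f ((Q : ℝ) • x) - f x)) :
    ∃ K : ℕ, ∀ z ∉ ratHull (span ℤ (Set.range b)), ∀ μ ∈ span ℤ (Set.range b),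
      f (z + Q ^ K • μ) = f z := by
  set L := span ℤ (Set.range b)
  have hP0 : P ≠ 0 := by rintro rfl; norm_num at hP
  have hT := irrationalDefectSet_finite b hf (c := P) (Int.cast_ne_zero.2 hP0)
  refine ⟨hT.toFinset.card, fun z hz μ hμ => ?_⟩
  obtain ⟨m, hm, hzT⟩ := exists_le_card_forall_sub_smul_notMem_ratHull hPQ hP0 hQ
    (fun s hs => (hT.mem_toFinset.1 hs).2) z
  set y := (Q : ℝ)⁻¹ ^ m • z
  have hzy : z = Q ^ m • y := by
    rw [← Int.cast_smul_eq_zsmul ℝ, Int.cast_pow, smul_smul, ← mul_pow,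
      mul_inv_cancel₀ (Int.cast_ne_zero.2 hQ), one_pow, one_smul]
  have hvanish : ∀ ν ∈ L, f (y + ν) = 0 := by
    intro ν hν
    refine apply_eq_zero_of_forall_sub_notMem_ratHull b hf hP hfP (fun h => hz ?_)
      fun i s hs h => hzT i s (hT.mem_toFinset.2 hs) ?_
    · rw [hzy]
      exact (ratHull L).smul_mem _ (by simpa using sub_mem h (le_ratHull L hν))
    · have h' := sub_mem ((ratHull L).smul_mem (Q ^ m) h) (le_ratHull L (L.smul_mem (Q ^ m) hν))
      rwa [smul_sub, smul_add, ← hzy, add_sub_right_comm, add_sub_cancel_right, smul_smul,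
        mul_comm] at h'
  have hscale := hfQ.apply_pow_smul_add_sub m y (L.smul_mem (Q ^ (hT.toFinset.card - m)) hμ)
  have hy : f y = 0 := by simpa using hvanish 0 (zero_mem L)
  rwa [hvanish _ (L.smul_mem _ hμ), hy, smul_add, ← hzy, smul_smul,
    ← pow_add, Nat.add_sub_cancel' hm, sub_self, sub_eq_zero] at hscale

end Lattice

theorem ratHull_subset_ratSpan {V : Type*} [AddCommGroup V] [Module ℝ V] (L : Submodule ℤ V) :
    (ratHull L : Set V) ⊆ ratSpan (L : Set V) := by
  intro v hv
  obtain ⟨n, hn, hnv⟩ := mem_ratHull.1 hv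
  refine ⟨1, fun _ => (n : ℚ)⁻¹, fun _ => n • v, fun _ => hnv, ?_⟩
  rw [Fin.sum_univ_one, ← Int.cast_smul_eq_zsmul ℝ, smul_smul, Rat.cast_inv, Rat.cast_intCast,
    inv_mul_cancel₀ (Int.cast_ne_zero.2 hn), one_smul]

theorem IsLattice.smul {V : Type*} [NormedAddCommGroup V] [NormedSpace ℝ V]
    [FiniteDimensional ℝ V] {Λ : Set V} (hΛ : IsLattice V Λ) {c : ℝ} (hc : c ≠ 0) :
    IsLattice V (c • Λ) := by
  obtain ⟨b, rfl⟩ := hΛ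
  exact ⟨b.isUnitSMul fun _ => hc.isUnit, by rw [← ZSpan.smul b hc, Submodule.coe_pointwise_smul]⟩

/-- **Proposition (non-torsion points).** If `P, Q > 1` are multiplicatively independent,
`f` is discretely supported and `f_P`, `f_Q` are `Λ`-periodic, then there is a lattice
`Λ' ⊆ Λ` such that `f(z + λ) = f(z)` for all `z ∉ ℚΛ` and `λ ∈ Λ'`.  If moreover
`gcd(P, Q) = 1`, one may take `Λ' = Λ`. -/
theorem periodicity_off_rational_points
    (V : Type*) [NormedAddCommGroup V] [NormedSpace ℝ V] [FiniteDimensional ℝ V]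
    (Λ : Set V) (hΛ : IsLattice V Λ)
    (P Q : ℤ) (hP : 1 < P) (hQ : 1 < Q) (hPQ : MultIndep P Q)
    (f : V → ℝ) (hf : DiscretelySupported f)
    (hfP : IsPeriodic Λ (fun x => f ((P : ℝ) • x) - f x))
    (hfQ : IsPeriodic Λ (fun x => f ((Q : ℝ) • x) - f x)) :
    (∃ Λ' : Set V, IsLattice V Λ' ∧ Λ' ⊆ Λ ∧
      ∀ z : V, z ∉ ratSpan Λ → ∀ l ∈ Λ', f (z + l) = f z) ∧
    (IsCoprime P Q → ∀ z : V, z ∉ ratSpan Λ → ∀ l ∈ Λ, f (z + l) = f z) := by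
  obtain ⟨b, rfl⟩ := hΛ
  set L := Submodule.span ℤ (Set.range b)
  have hirr : ∀ z ∉ ratSpan (L : Set V), z ∉ ratHull L :=
    fun z hz h => hz (ratHull_subset_ratSpan L h)
  obtain ⟨M, hM⟩ := exists_pow_period_off_ratHull b hf hPQ
    (by rwa [abs_of_pos (by omega)]) (by omega) hfP hfQ
  obtain ⟨N, hN⟩ := exists_pow_period_off_ratHull b hf hPQ.symm
    (by rwa [abs_of_pos (by omega)]) (by omega) hfQ hfP
  refine ⟨⟨(Q : ℝ) ^ M • (L : Set V), IsLattice.smul ⟨b, rfl⟩ (by positivity), ?_, ?_⟩,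
    fun hco z hz l hl => ?_⟩
  · rintro _ ⟨μ, hμ, rfl⟩
    simpa only [← Int.cast_pow, Int.cast_smul_eq_zsmul, SetLike.mem_coe] using L.smul_mem (Q ^ M) hμ
  · rintro z hz _ ⟨μ, hμ, rfl⟩
    simpa only [← Int.cast_pow, Int.cast_smul_eq_zsmul] using hM z (hirr z hz) μ hμ
  · exact apply_add_eq_of_isCoprime (S := (ratHull L)ᶜ)
      (fun z hz μ hμ h => hz (by simpa using sub_mem h (le_ratHull L hμ)))
      (hco.pow (m := N) (n := M)) hN hM (hirr z hz) hl
end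

section
/- Let Λ ⊂ ℂ be a lattice, let p be an integer greater than 1, and let f be a Λ-elliptic meromorphic function, not identically zero. If there is a constant c ∈ ℂ such that f(pz) = c·f(z) for all z ∈ ℂ, then f is constant. -/
open Filter Function

/-- `Λ` is a lattice in `ℂ`: the set `ℤω₁ + ℤω₂` for two complex numbers `ω₁, ω₂`
which are linearly independent over `ℝ`. -/
def IsComplexLattice (Λ : Set ℂ) : Prop :=
  ∃ ω₁ ω₂ : ℂ, LinearIndependent ℝ ![ω₁, ω₂] ∧
    Λ = {z : ℂ | ∃ m n : ℤ, z = (m : ℂ) * ω₁ + (n : ℂ) * ω₂}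

/-- `g` is a `Λ`-elliptic function: a meromorphic function on `ℂ` satisfying
`g(z + λ) = g(z)` for all `z ∈ ℂ` and `λ ∈ Λ`. -/
def IsElliptic (Λ : Set ℂ) (g : ℂ → ℂ) : Prop :=
  (∀ z : ℂ, MeromorphicAt g z) ∧ ∀ z : ℂ, ∀ l ∈ Λ, g (z + l) = g z

/-!
The relation `f(pz) = c f(z)` with `c ≠ 0` makes `t / p` a period of `f` whenever `t` is one, so
the periods of `f` contain `p⁻ᵏ Λ` for every `k` and are therefore dense in `ℂ`. A meromorphic
function is continuous somewhere, and a function with a dense group of periods that is continuous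
at a point `w` takes the value `f w` everywhere. (If `c = 0`, then `f = 0`.)
-/

open Set

namespace Function

def periodSubgroup {G β : Type*} [AddGroup G] (f : G → β) : AddSubgroup G where
  carrier := {t | Periodic f t}
  add_mem' := Periodic.add_period
  zero_mem' := fun x => by rw [add_zero]
  neg_mem' := Periodic.neg

theorem mem_periodSubgroup {G β : Type*} [AddGroup G] {f : G → β} {t : G} :
    t ∈ periodSubgroup f ↔ Periodic f t :=
  Iff.rfl

theorem eq_of_dense_periodSubgroup {G β : Type*} [AddGroup G] [TopologicalSpace G]
    [ContinuousAdd G] [TopologicalSpace β] [T2Space β] {f : G → β}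
    (hP : Dense (periodSubgroup f : Set G)) {w : G} (hw : ContinuousAt f w) (z : G) :
    f z = f w := by
  have hcont : ContinuousAt (fun t => f (z + t)) (-z + w) :=
    hw.comp_of_eq (continuous_const_add z).continuousAt (add_neg_cancel_left z w)
  have himg : (fun t => f (z + t)) '' periodSubgroup f ⊆ {f z} := by
    rintro _ ⟨t, ht, rfl⟩
    exact ht z
  have := closure_minimal himg isClosed_singleton (mem_closure_image hcont (hP (-z + w)))
  rw [mem_singleton_iff, add_neg_cancel_left] at this
  exact this.symm

section Eigenfunction

variable {K M : Type*} [Field K] [MonoidWithZero M] [IsLeftCancelMulZero M] {f : K → M}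
  {p : K} {c : M}

theorem Periodic.div_of_map_mul_eq_mul (hp : p ≠ 0) (hc : c ≠ 0)
    (hfc : ∀ z, f (p * z) = c * f z) {t : K} (ht : Periodic f t) : Periodic f (t / p) :=
  fun z => mul_left_cancel₀ hc <| by rw [← hfc, ← hfc, mul_add, mul_div_cancel₀ _ hp, ht]

theorem Periodic.div_pow_of_map_mul_eq_mul (hp : p ≠ 0) (hc : c ≠ 0)
    (hfc : ∀ z, f (p * z) = c * f z) {t : K} (ht : Periodic f t) (k : ℕ) :
    Periodic f (t / p ^ k) := by
  induction k with
  | zero => simpa using ht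
  | succ k ih =>
    rw [pow_succ, ← div_div]
    exact ih.div_of_map_mul_eq_mul hp hc hfc

end Eigenfunction

end Function

namespace AddSubgroup

variable {ι E : Type*} [Fintype ι] [AddCommGroup E] [Module ℝ E] [TopologicalSpace E]
  [IsTopologicalAddGroup E] [ContinuousSMul ℝ E] [T2Space E]

theorem dense_of_forall_exists_smul_basis_mem (b : Module.Basis ι ℝ E) (S : AddSubgroup E)
    (h : ∀ i, ∀ ε > 0, ∃ r ∈ Ioo (0 : ℝ) ε, r • b i ∈ S) : Dense (S : Set E) := by
  let T : ι → AddSubgroup ℝ := fun i =>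
    S.comap (LinearMap.toSpanSingleton ℝ E (b i)).toAddMonoidHom
  have hT : ∀ i, Dense (T i : Set ℝ) := fun i =>
    (T i).dense_of_not_isolated_zero fun ε hε =>
      (h i ε hε).imp fun _ ⟨hr, hrS⟩ => ⟨hrS, hr⟩
  refine ((dense_pi univ fun i _ => hT i).preimage b.equivFunL.isOpenMap).mono fun v hv => ?_
  rw [← b.sum_repr v]
  exact sum_mem fun i _ => hv i (mem_univ i)

theorem dense_of_forall_inv_pow_smul_basis_mem (b : Module.Basis ι ℝ E) (S : AddSubgroup E)
    {q : ℝ} (hq : 1 < q) (h : ∀ i (k : ℕ), (q ^ k)⁻¹ • b i ∈ S) : Dense (S : Set E) := by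
  refine S.dense_of_forall_exists_smul_basis_mem b fun i ε hε => ?_
  obtain ⟨k, hk⟩ := exists_pow_lt_of_lt_one hε (inv_lt_one_of_one_lt₀ hq)
  exact ⟨(q ^ k)⁻¹, ⟨by positivity, by rwa [← inv_pow]⟩, h i k⟩

end AddSubgroup

theorem elliptic_eigenfunction_constant_general
    (Λ : Set ℂ) (hΛ : IsComplexLattice Λ)
    (p : ℤ) (hp : 1 < p)
    (f : ℂ → ℂ) (hf : IsElliptic Λ f)
    (c : ℂ) (hc : ∀ z : ℂ, f ((p : ℂ) * z) = c * f z) :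
    ∃ k : ℂ, ∀ z : ℂ, f z = k := by
  obtain ⟨ω₁, ω₂, hli, rfl⟩ := hΛ
  obtain ⟨hmero, hper⟩ := hf
  have hp0 : (p : ℂ) ≠ 0 := by exact_mod_cast (by omega : p ≠ 0)
  rcases eq_or_ne c 0 with rfl | hc0
  · exact ⟨0, fun z => by simpa [mul_div_cancel₀ _ hp0] using hc (z / p)⟩
  let b := basisOfLinearIndependentOfCardEqFinrank hli (by simp [Complex.finrank_real_complex])
  have hb : ∀ i, Periodic f (b i) := by
    simp only [b, coe_basisOfLinearIndependentOfCardEqFinrank, Fin.forall_fin_two]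
    exact ⟨fun z => hper z _ ⟨1, 0, by simp⟩, fun z => hper z _ ⟨0, 1, by simp⟩⟩
  have hdense : Dense (periodSubgroup f : Set ℂ) :=
    (periodSubgroup f).dense_of_forall_inv_pow_smul_basis_mem b (q := p) (by exact_mod_cast hp)
      fun i k => by
        have hsmul : ((p : ℝ) ^ k)⁻¹ • b i = b i / (p : ℂ) ^ k := by
          rw [Complex.real_smul]
          push_cast
          ring
        rw [hsmul, mem_periodSubgroup]
        exact (hb i).div_pow_of_map_mul_eq_mul hp0 hc0 hc k
  obtain ⟨w, hw⟩ := (hmero 0).eventually_analyticAt.exists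
  exact ⟨f w, eq_of_dense_periodSubgroup hdense hw.continuousAt⟩

/-- **Rigidity.** A nonzero `Λ`-elliptic function `f` with `f(pz) = c·f(z)` for some
constant `c` and an integer `p > 1` is constant. -/
theorem elliptic_eigenfunction_constant
    (Λ : Set ℂ) (hΛ : IsComplexLattice Λ)
    (p : ℤ) (hp : 1 < p)
    (f : ℂ → ℂ) (hf : IsElliptic Λ f) (hf0 : ∃ z : ℂ, f z ≠ 0)
    (c : ℂ) (hc : ∀ z : ℂ, f ((p : ℂ) * z) = c * f z) :
    ∃ k : ℂ, ∀ z : ℂ, f z = k :=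
  elliptic_eigenfunction_constant_general Λ hΛ p hp f hf c hc
end

section
/- Fix an integer N ≥ 1 and nonzero integers x, y with x ≡ y (mod N). Let S and T be disjoint non-empty finite sets of primes, let P = ∏_{p∈S} p^{v_p(x)+1} and Q = ∏_{q∈T} q^{v_q(y)+1}, and write y − x = kN. Then for any integers s, t with sP − tQ = k, the integer z = x + sPN satisfies x ∼_S z and z ∼_T y. -/
lemma prod_pow_ne_zero (T : Finset ℕ) (hT : ∀ p ∈ T, p.Prime) (f : ℕ → ℕ) :
    (∏ q ∈ T, (q : ℤ) ^ (f q)) ≠ 0 := by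
  apply Finset.prod_ne_zero_iff.mpr
  intro q hq
  exact pow_ne_zero _ (Int.natCast_ne_zero.mpr (hT q hq).ne_zero)

lemma key_lemma (N : ℤ) (T : Finset ℕ) (hT : ∀ p ∈ T, p.Prime) (hTne : T.Nonempty)
    (y c : ℤ) (hy : y ≠ 0)
    (hc : (∏ q ∈ T, (q : ℤ) ^ (padicValInt q y + 1)) ∣ c) :
    SimRel N T y (y + c * N) := by
  set Q : ℤ := ∏ q ∈ T, (q : ℤ) ^ (padicValInt q y + 1) with hQ
  set z : ℤ := y + c * N with hzdef
  -- each q^(v+1) divides Q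
  have hdvdQ : ∀ q ∈ T, (q : ℤ) ^ (padicValInt q y + 1) ∣ Q := fun q hq =>
    Finset.dvd_prod_of_mem _ hq
  have hnotdvd : ∀ q ∈ T, ¬ ((q : ℤ) ^ (padicValInt q y + 1) ∣ y) := by
    intro q hq h
    haveI : Fact q.Prime := ⟨hT q hq⟩
    rcases (padicValInt_dvd_iff _ _).mp h with h0 | hle
    · exact hy h0
    · omega
  -- z ≠ 0
  have hz0 : z ≠ 0 := by
    obtain ⟨q, hq⟩ := hTne
    intro h0
    apply hnotdvd q hq
    have hyv : -(c * N) = y := by linarith [hzdef ▸ h0]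
    exact (dvd_neg.mpr (dvd_mul_of_dvd_left ((hdvdQ q hq).trans hc) N)).trans
      (dvd_of_eq hyv)
  -- valuations agree
  have hval : ∀ q ∈ T, padicValInt q y = padicValInt q z := by
    intro q hq
    haveI : Fact q.Prime := ⟨hT q hq⟩
    have hcd : (q : ℤ) ^ (padicValInt q y + 1) ∣ c * N :=
      dvd_mul_of_dvd_left ((hdvdQ q hq).trans hc) N
    have h1 : (q : ℤ) ^ (padicValInt q y) ∣ z := by
      apply dvd_add (padicValInt_dvd y)
      exact (pow_dvd_pow _ (Nat.le_succ _)).trans hcd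
    have h2 : ¬ ((q : ℤ) ^ (padicValInt q y + 1) ∣ z) := by
      intro h
      exact hnotdvd q hq ((dvd_sub h hcd).trans
        (dvd_of_eq (by rw [hzdef]; ring)))
    have hle : padicValInt q y ≤ padicValInt q z := by
      rcases (padicValInt_dvd_iff _ _).mp h1 with h0 | hle
      · exact absurd h0 hz0
      · exact hle
    have hlt : ¬ (padicValInt q y + 1 ≤ padicValInt q z) := fun h =>
      h2 ((padicValInt_dvd_iff _ _).mpr (Or.inr h))
    omega
  -- coprimality and divisibility
  set D : ℤ := ∏ q ∈ T, (q : ℤ) ^ (padicValInt q y) with hD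
  have hDdvd : D ∣ y := by
    apply Finset.prod_dvd_of_coprime
    · intro a ha b hb hab
      have : IsCoprime (a : ℤ) (b : ℤ) :=
        Int.isCoprime_iff_gcd_eq_one.mpr (by
          simpa [Int.gcd_natCast_natCast] using
            (Nat.coprime_primes (hT a ha) (hT b hb)).mpr hab)
      exact (this.pow : IsCoprime _ _)
    · intro q hq
      haveI : Fact q.Prime := ⟨hT q hq⟩
      exact padicValInt_dvd y
  have hDne : D ≠ 0 := prod_pow_ne_zero T hT _
  have hQDR : Q = D * ∏ q ∈ T, (q : ℤ) := by
    rw [hQ, hD, ← Finset.prod_mul_distrib]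
    exact Finset.prod_congr rfl (fun q hq => by rw [pow_succ])
  obtain ⟨w, hw⟩ := hDdvd
  obtain ⟨m, hm⟩ := hc
  -- compute primeToPart
  have hpz : primeToPart T z = w + (∏ q ∈ T, (q : ℤ)) * m * N := by
    unfold primeToPart
    have : (∏ p ∈ T, (p : ℤ) ^ padicValInt p z) = D := by
      rw [hD]; exact Finset.prod_congr rfl (fun q hq => by rw [hval q hq])
    rw [this, hzdef, hw, hm, hQDR]
    rw [show D * w + D * (∏ q ∈ T, (q : ℤ)) * m * N
        = D * (w + (∏ q ∈ T, (q : ℤ)) * m * N) by ring]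
    exact Int.mul_ediv_cancel_left _ hDne
  have hpy : primeToPart T y = w := by
    unfold primeToPart
    rw [← hD, hw]
    exact Int.mul_ediv_cancel_left _ hDne
  refine Or.inr ⟨hy, hz0, hval, ?_⟩
  rw [hpy, hpz]
  exact (Int.modEq_iff_dvd.mpr ⟨(∏ q ∈ T, (q : ℤ)) * m, by ring⟩)

lemma simrel_symm {N : ℤ} {T : Finset ℕ} {a b : ℤ} (h : SimRel N T a b) : SimRel N T b a := by
  rcases h with ⟨h1, h2⟩ | ⟨h1, h2, h3, h4⟩
  · exact Or.inl ⟨h2, h1⟩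
  · exact Or.inr ⟨h2, h1, fun p hp => (h3 p hp).symm, h4.symm⟩

/-- **Key step of the pq-Lemma.** For nonzero `x ≡ y (mod N)`, with
`P = ∏_{p ∈ S} p^{v_p(x)+1}`, `Q = ∏_{q ∈ T} q^{v_q(y)+1}`, `y - x = kN`, and any
`s, t` with `sP - tQ = k`, the integer `z = x + sPN` satisfies `x ∼_S z` and `z ∼_T y`. -/
theorem pq_lemma_key_step
    (N : ℤ) (hN : 1 ≤ N)
    (S T : Finset ℕ) (hS : ∀ p ∈ S, p.Prime) (hT : ∀ p ∈ T, p.Prime)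
    (hST : Disjoint S T) (hSne : S.Nonempty) (hTne : T.Nonempty)
    (x y : ℤ) (hx : x ≠ 0) (hy : y ≠ 0)
    (P Q : ℤ)
    (hP : P = ∏ p ∈ S, (p : ℤ) ^ (padicValInt p x + 1))
    (hQ : Q = ∏ q ∈ T, (q : ℤ) ^ (padicValInt q y + 1))
    (k : ℤ) (hk : y - x = k * N)
    (s t : ℤ) (hst : s * P - t * Q = k)
    (z : ℤ) (hz : z = x + s * P * N) :
    SimRel N S x z ∧ SimRel N T z y := by
  constructor
  · rw [hz]
    exact key_lemma N S hS hSne x (s * P) hx (by rw [hP] at *; exact dvd_mul_left _ s)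
  · have hz' : z = y + (t * Q) * N := by linear_combination hz + N * hst - hk
    rw [hz']
    exact simrel_symm (key_lemma N T hT hTne y (t * Q) hy (by rw [hQ] at *; exact dvd_mul_left _ t))
end
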